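/- arXiv:0804.3051 — 5 statements merged into one kernel-verified Lean document; each statement's English description precedes it below -/
import Mathlib

section
/- Let Ω ⊂ ℝⁿ be open, 1 < p < ∞, 1 ≤ q < p. If K = ⋃_{i=1}^k K_i is a finite union of compact subsets of Ω, then cap_{p,q}(K, Ω)^{q/p} ≤ ∑_{i=1}^k cap_{p,q}(K_i, Ω)^{q/p}. -/
open MeasureTheory Set
open scoped ENNReal

/-- The distribution function `μ_{[f]}(s) = μ({|f| > s})`. -/
noncomputable def distribFn {α : Type*} [MeasurableSpace α] (μ : Measure α)
    (f : α → ℝ) (s : ℝ) : ℝ≥0∞ :=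
  μ {x | s < |f x|}

/-- The Lorentz `p,q`-(quasi)norm, `1 < p < ∞`, `1 ≤ q ≤ ∞`, expressed through the
distribution function. -/
noncomputable def lorentzNorm {α : Type*} [MeasurableSpace α] (μ : Measure α)
    (p : ℝ) (q : ℝ≥0∞) (f : α → ℝ) : ℝ≥0∞ :=
  if q = ⊤ then ⨆ s : Ioi (0 : ℝ), ENNReal.ofReal s.1 * distribFn μ f s.1 ^ (1 / p)
  else (ENNReal.ofReal p *
      ∫⁻ s in Ioi (0 : ℝ),
        ENNReal.ofReal (s ^ (q.toReal - 1)) * distribFn μ f s ^ (q.toReal / p)) ^ (1 / q.toReal)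

/-- Admissible functions for the conductor `(K, Ω)`: Lipschitz, compactly supported
in `Ω`, and `≥ 1` in a neighborhood of `K`. -/
def admissible {n : ℕ} (K Ω : Set (Fin n → ℝ)) : Set ((Fin n → ℝ) → ℝ) :=
  {u | (∃ c, LipschitzWith c u) ∧ HasCompactSupport u ∧ tsupport u ⊆ Ω ∧
    K ⊆ interior {x | 1 ≤ u x}}

/-- The Sobolev–Lorentz `p,q`-capacitance of the conductor `(K, Ω)`:
`cap_{p,q}(K, Ω) = inf { ‖∇u‖_{L^{p,q}(Ω, mₙ; ℝⁿ)}^p : u ∈ W(K, Ω) }`. -/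
noncomputable def capacitance (n : ℕ) (p : ℝ) (q : ℝ≥0∞)
    (K Ω : Set (Fin n → ℝ)) : ℝ≥0∞ :=
  ⨅ u ∈ admissible K Ω,
    lorentzNorm (volume.restrict Ω) p q (fun x => ‖fderiv ℝ u x‖) ^ p

/-! ### Auxiliary lemmas -/

private lemma distribFn_antitone {α : Type*} [MeasurableSpace α] (μ : Measure α) (f : α → ℝ) :
    Antitone (distribFn μ f) :=
  fun s t hst => measure_mono (fun _ hx => lt_of_le_of_lt hst hx)

private lemma distribFn_measurable {α : Type*} [MeasurableSpace α] (μ : Measure α) (f : α → ℝ) :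
    Measurable (distribFn μ f) :=
  (distribFn_antitone μ f).measurable

private lemma iInf_rpow' {ι : Sort*} (f : ι → ℝ≥0∞) {c : ℝ} (hc : 0 < c) :
    (⨅ i, f i) ^ c = ⨅ i, f i ^ c := by
  refine le_antisymm (le_iInf fun i => ENNReal.rpow_le_rpow (iInf_le f i) hc.le) ?_
  have h2 : ∀ i, (f i ^ c) ^ (1 / c) = f i := fun i => by
    rw [← ENNReal.rpow_mul, mul_one_div_cancel hc.ne', ENNReal.rpow_one]
  have h1 : (⨅ i, f i ^ c) ^ (1 / c) ≤ ⨅ i, f i := by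
    refine le_iInf fun i => ?_
    rw [← h2 i]
    exact ENNReal.rpow_le_rpow (iInf_le _ i) (by positivity)
  calc (⨅ i, f i ^ c) = ((⨅ i, f i ^ c) ^ (1 / c)) ^ c := by
        rw [← ENNReal.rpow_mul, one_div_mul_cancel hc.ne', ENNReal.rpow_one]
    _ ≤ (⨅ i, f i) ^ c := ENNReal.rpow_le_rpow h1 hc.le

/-- At a point where `u`, `v` and `max u v` are all differentiable, the derivative of
`max u v` is one of the two derivatives. -/
private lemma fderiv_max_cases {n : ℕ} (u v : (Fin n → ℝ) → ℝ)
    (hcu : Continuous u) (hcv : Continuous v) (x : Fin n → ℝ)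
    (hu : DifferentiableAt ℝ u x) (hv : DifferentiableAt ℝ v x)
    (hw : DifferentiableAt ℝ (fun y => max (u y) (v y)) x) :
    fderiv ℝ (fun y => max (u y) (v y)) x = fderiv ℝ u x ∨
      fderiv ℝ (fun y => max (u y) (v y)) x = fderiv ℝ v x := by
  rcases lt_trichotomy (u x) (v x) with h | h | h
  · right
    apply Filter.EventuallyEq.fderiv_eq
    have hmem : {y | u y < v y} ∈ nhds x := (isOpen_lt hcu hcv).mem_nhds h
    filter_upwards [hmem] with y hy
    exact max_eq_right hy.le
  · left
    have hmin : IsLocalMin (fun y => max (u y) (v y) - u y) x := by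
      apply Filter.Eventually.of_forall
      intro y
      simp only [h, max_self, sub_self]
      exact sub_nonneg.2 (le_max_left _ _)
    have h0 : fderiv ℝ (fun y => max (u y) (v y) - u y) x = 0 := hmin.fderiv_eq_zero
    rw [fderiv_fun_sub hw hu] at h0
    exact sub_eq_zero.1 h0
  · left
    apply Filter.EventuallyEq.fderiv_eq
    have hmem : {y | v y < u y} ∈ nhds x := (isOpen_lt hcv hcu).mem_nhds h
    filter_upwards [hmem] with y hy
    exact max_eq_left hy.le

private lemma ae_fderiv_max_le {n : ℕ} {cu cv : NNReal} (u v : (Fin n → ℝ) → ℝ)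
    (hu : LipschitzWith cu u) (hv : LipschitzWith cv v) :
    ∀ᵐ x : Fin n → ℝ, ‖fderiv ℝ (fun y => max (u y) (v y)) x‖ ≤
      max ‖fderiv ℝ u x‖ ‖fderiv ℝ v x‖ := by
  filter_upwards [hu.ae_differentiableAt (μ := volume),
    hv.ae_differentiableAt (μ := volume),
    (hu.max hv).ae_differentiableAt (μ := volume)] with x hxu hxv hxw
  rcases fderiv_max_cases u v hu.continuous hv.continuous x hxu hxv hxw with h | h
  · rw [h]; exact le_max_left _ _
  · rw [h]; exact le_max_right _ _

private lemma max_admissible {n : ℕ} {K L Ω : Set (Fin n → ℝ)}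
    {u v : (Fin n → ℝ) → ℝ} (hu : u ∈ admissible K Ω) (hv : v ∈ admissible L Ω) :
    (fun y => max (u y) (v y)) ∈ admissible (K ∪ L) Ω := by
  obtain ⟨⟨cu, hcu⟩, hKu, hsu, hiu⟩ := hu
  obtain ⟨⟨cv, hcv⟩, hKv, hsv, hiv⟩ := hv
  have hsupp : tsupport (fun y => max (u y) (v y)) ⊆ tsupport u ∪ tsupport v := by
    rw [tsupport, tsupport, tsupport, ← closure_union]
    apply closure_mono
    intro y hy
    by_contra hcon
    rw [mem_union] at hcon
    push_neg at hcon
    simp only [Function.mem_support, not_not] at hcon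
    obtain ⟨h1, h2⟩ := hcon
    exact hy (by simp [Function.mem_support, h1, h2])
  refine ⟨⟨max cu cv, hcu.max hcv⟩, ?_, hsupp.trans (union_subset hsu hsv), ?_⟩
  · exact (hKu.union hKv).of_isClosed_subset isClosed_closure hsupp
  · refine union_subset (hiu.trans (interior_mono ?_)) (hiv.trans (interior_mono ?_))
    · intro x hx
      simp only [mem_setOf_eq] at hx ⊢
      exact hx.trans (le_max_left _ _)
    · intro x hx
      simp only [mem_setOf_eq] at hx ⊢
      exact hx.trans (le_max_right _ _)

private lemma rpow_lorentz_eq {n : ℕ} (p q : ℝ) (hp : 1 < p) (hq : 1 ≤ q)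
    (Ω : Set (Fin n → ℝ)) (g : (Fin n → ℝ) → ℝ) :
    (lorentzNorm (volume.restrict Ω) p (ENNReal.ofReal q) g ^ p) ^ (q / p) =
      ENNReal.ofReal p * ∫⁻ s in Ioi (0 : ℝ),
        ENNReal.ofReal (s ^ (q - 1)) * distribFn (volume.restrict Ω) g s ^ (q / p) := by
  have hp0 : (0 : ℝ) < p := lt_trans zero_lt_one hp
  have hq0 : (0 : ℝ) < q := lt_of_lt_of_le zero_lt_one hq
  have htr : (ENNReal.ofReal q).toReal = q := ENNReal.toReal_ofReal hq0.le
  rw [lorentzNorm, if_neg ENNReal.ofReal_ne_top, htr, ← ENNReal.rpow_mul, ← ENNReal.rpow_mul,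
    show 1 / q * (p * (q / p)) = 1 by field_simp, ENNReal.rpow_one]

private lemma capacitance_empty {n : ℕ} (p q : ℝ) (hp : 1 < p) (hq : 1 ≤ q)
    (Ω : Set (Fin n → ℝ)) :
    capacitance n p (ENNReal.ofReal q) ∅ Ω = 0 := by
  have hp0 : (0 : ℝ) < p := lt_trans zero_lt_one hp
  have hq0 : (0 : ℝ) < q := lt_of_lt_of_le zero_lt_one hq
  have h0 : (fun _ : Fin n → ℝ => (0 : ℝ)) ∈ admissible ∅ Ω := by
    refine ⟨⟨0, LipschitzWith.const 0⟩, ?_, ?_, empty_subset _⟩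
    · have : tsupport (fun _ : Fin n → ℝ => (0 : ℝ)) = ∅ := by
        simp [tsupport, Function.support]
      rw [HasCompactSupport, this]; exact isCompact_empty
    · have : tsupport (fun _ : Fin n → ℝ => (0 : ℝ)) = ∅ := by
        simp [tsupport, Function.support]
      rw [this]; exact empty_subset _
  refine le_antisymm ?_ zero_le
  refine le_trans (iInf₂_le _ h0) (le_of_eq ?_)
  have hfd : ∀ x : Fin n → ℝ, fderiv ℝ (fun _ : Fin n → ℝ => (0 : ℝ)) x = 0 := by
    intro x; exact fderiv_const_apply 0
  have hdist : ∀ s ∈ Ioi (0 : ℝ),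
      distribFn (volume.restrict Ω) (fun x => ‖fderiv ℝ (fun _ : Fin n → ℝ => (0:ℝ)) x‖) s = 0 := by
    intro s hs
    have : {x : Fin n → ℝ | s < |‖fderiv ℝ (fun _ : Fin n → ℝ => (0:ℝ)) x‖|} = ∅ := by
      ext x
      simp [hfd x, not_lt, le_of_lt (mem_Ioi.1 hs)]
    rw [distribFn, this, measure_empty]
  have hI : (∫⁻ s in Ioi (0 : ℝ),
      ENNReal.ofReal (s ^ (q - 1)) *
        distribFn (volume.restrict Ω) (fun x => ‖fderiv ℝ (fun _ : Fin n → ℝ => (0:ℝ)) x‖) s ^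
          (q / p)) = 0 := by
    rw [← lintegral_zero (μ := volume.restrict (Ioi (0:ℝ)))]
    apply setLIntegral_congr_fun measurableSet_Ioi
    simp only [EqOn]
    intro s hs
    rw [hdist s hs, ENNReal.zero_rpow_of_pos (div_pos hq0 hp0), mul_zero]
  rw [lorentzNorm, if_neg ENNReal.ofReal_ne_top, ENNReal.toReal_ofReal hq0.le, hI, mul_zero,
    ENNReal.zero_rpow_of_pos (by positivity : (0:ℝ) < 1 / q), ENNReal.zero_rpow_of_pos hp0]

private lemma cap_pow {n : ℕ} (p q : ℝ) {c : ℝ} (hc : 0 < c)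
    (K Ω : Set (Fin n → ℝ)) :
    capacitance n p (ENNReal.ofReal q) K Ω ^ c =
      ⨅ u, ⨅ _ : u ∈ admissible K Ω,
        (lorentzNorm (volume.restrict Ω) p (ENNReal.ofReal q)
          (fun x => ‖fderiv ℝ u x‖) ^ p) ^ c := by
  rw [capacitance, iInf_rpow' _ hc]
  exact iInf_congr fun u => iInf_rpow' _ hc

private lemma capacitance_binary {n : ℕ} (p q : ℝ) (hp : 1 < p) (hq : 1 ≤ q) (hqp : q < p)
    (Ω K L : Set (Fin n → ℝ)) :
    capacitance n p (ENNReal.ofReal q) (K ∪ L) Ω ^ (q / p) ≤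
      capacitance n p (ENNReal.ofReal q) K Ω ^ (q / p) +
        capacitance n p (ENNReal.ofReal q) L Ω ^ (q / p) := by
  have hp0 : (0 : ℝ) < p := lt_trans zero_lt_one hp
  have hq0 : (0 : ℝ) < q := lt_of_lt_of_le zero_lt_one hq
  have hc : (0 : ℝ) < q / p := div_pos hq0 hp0
  have hc1 : q / p ≤ 1 := (div_le_one hp0).2 hqp.le
  rw [cap_pow p q hc K Ω, cap_pow p q hc L Ω]
  rw [ENNReal.iInf_add]
  refine le_iInf fun u => ?_
  rw [ENNReal.iInf_add]
  refine le_iInf fun hu => ?_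
  rw [ENNReal.add_iInf]
  refine le_iInf fun v => ?_
  rw [ENNReal.add_iInf]
  refine le_iInf fun hv => ?_
  -- the competitor
  set w : (Fin n → ℝ) → ℝ := fun y => max (u y) (v y) with hw
  have hwadm : w ∈ admissible (K ∪ L) Ω := max_admissible hu hv
  have step1 : capacitance n p (ENNReal.ofReal q) (K ∪ L) Ω ^ (q / p) ≤
      (lorentzNorm (volume.restrict Ω) p (ENNReal.ofReal q)
        (fun x => ‖fderiv ℝ w x‖) ^ p) ^ (q / p) :=
    ENNReal.rpow_le_rpow (iInf₂_le w hwadm) hc.le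
  refine step1.trans ?_
  obtain ⟨cu, hcu⟩ := hu.1
  obtain ⟨cv, hcv⟩ := hv.1
  -- distribution function subadditivity
  have hae : ∀ᵐ x ∂(volume.restrict Ω),
      ‖fderiv ℝ w x‖ ≤ max ‖fderiv ℝ u x‖ ‖fderiv ℝ v x‖ :=
    ae_restrict_of_ae (ae_fderiv_max_le u v hcu hcv)
  have key : ∀ s : ℝ,
      distribFn (volume.restrict Ω) (fun x => ‖fderiv ℝ w x‖) s ≤
        distribFn (volume.restrict Ω) (fun x => ‖fderiv ℝ u x‖) s +
          distribFn (volume.restrict Ω) (fun x => ‖fderiv ℝ v x‖) s := by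
    intro s
    refine le_trans (measure_mono_ae ?_) (measure_union_le _ _)
    filter_upwards [hae] with x hx hmem
    simp only [mem_setOf_eq, abs_norm] at hmem ⊢
    rcases lt_max_iff.1 (lt_of_lt_of_le hmem hx) with h | h
    · exact Or.inl h
    · exact Or.inr h
  -- integral subadditivity
  have hmeasu : Measurable (fun s : ℝ => ENNReal.ofReal (s ^ (q - 1)) *
      distribFn (volume.restrict Ω) (fun x => ‖fderiv ℝ u x‖) s ^ (q / p)) := by
    exact ((measurable_id.pow_const (q - 1)).ennreal_ofReal).mul
      ((distribFn_measurable _ _).pow_const (q / p))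
  have hI : (∫⁻ s in Ioi (0 : ℝ), ENNReal.ofReal (s ^ (q - 1)) *
        distribFn (volume.restrict Ω) (fun x => ‖fderiv ℝ w x‖) s ^ (q / p)) ≤
      (∫⁻ s in Ioi (0 : ℝ), ENNReal.ofReal (s ^ (q - 1)) *
        distribFn (volume.restrict Ω) (fun x => ‖fderiv ℝ u x‖) s ^ (q / p)) +
      (∫⁻ s in Ioi (0 : ℝ), ENNReal.ofReal (s ^ (q - 1)) *
        distribFn (volume.restrict Ω) (fun x => ‖fderiv ℝ v x‖) s ^ (q / p)) := by
    rw [← lintegral_add_left hmeasu]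
    apply lintegral_mono
    intro s
    dsimp only
    rw [← mul_add]
    apply mul_le_mul_right
    calc distribFn (volume.restrict Ω) (fun x => ‖fderiv ℝ w x‖) s ^ (q / p)
        ≤ (distribFn (volume.restrict Ω) (fun x => ‖fderiv ℝ u x‖) s +
            distribFn (volume.restrict Ω) (fun x => ‖fderiv ℝ v x‖) s) ^ (q / p) :=
          ENNReal.rpow_le_rpow (key s) hc.le
      _ ≤ _ := ENNReal.rpow_add_le_add_rpow _ _ hc.le hc1
  rw [rpow_lorentz_eq p q hp hq Ω, rpow_lorentz_eq p q hp hq Ω, rpow_lorentz_eq p q hp hq Ω,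
    ← mul_add]
  exact mul_le_mul_right hI _

/-- Subadditivity of the `q/p`-th power of the `p,q`-capacitance over finite unions
when `1 ≤ q < p`. -/
theorem capacitance_subadditive_q_lt_p {n : ℕ} (p q : ℝ)
    (hp : 1 < p) (hq : 1 ≤ q) (hqp : q < p)
    {Ω : Set (Fin n → ℝ)} (hΩ : IsOpen Ω)
    (k : ℕ) (K : Fin k → Set (Fin n → ℝ))
    (hK : ∀ i, IsCompact (K i)) (hKΩ : ∀ i, K i ⊆ Ω) :
    capacitance n p (ENNReal.ofReal q) (⋃ i, K i) Ω ^ (q / p) ≤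
      ∑ i, capacitance n p (ENNReal.ofReal q) (K i) Ω ^ (q / p) := by
  clear hK hKΩ hΩ
  induction k with
  | zero =>
      rw [iUnion_of_empty, capacitance_empty p q hp hq Ω,
        ENNReal.zero_rpow_of_pos (div_pos (lt_of_lt_of_le zero_lt_one hq)
          (lt_trans zero_lt_one hp))]
      simp
  | succ k ih =>
      have hU : (⋃ i, K i) = K 0 ∪ ⋃ i : Fin k, K i.succ := by
        ext x
        simp [Fin.exists_fin_succ]
      rw [hU, Fin.sum_univ_succ]
      exact (capacitance_binary p q hp hq hqp Ω _ _).trans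
        (add_le_add_right (ih (fun i => K i.succ)) _)
end

section
/- Let 1 < p < ∞ and 1 ≤ q ≤ p. If Ω₁, …, Ω_k are pairwise disjoint open subsets of ℝⁿ and K_i are compact subsets of Ω_i, then cap_{p,q}(⋃_{i=1}^k K_i, ⋃_{i=1}^k Ω_i) ≥ ∑_{i=1}^k cap_{p,q}(K_i, Ω_i). -/
open MeasureTheory Set
open scoped ENNReal

/-- A preconnected set meeting both `t` and its complement meets the frontier of `t`. -/
lemma preconn_inter_frontier {X : Type*} [TopologicalSpace X] {s t : Set X}
    (hs : IsPreconnected s) (hxt : (s ∩ t).Nonempty) (hyt : (s \ t).Nonempty) :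
    (s ∩ frontier t).Nonempty := by
  by_contra hfr
  rw [Set.not_nonempty_iff_eq_empty, Set.eq_empty_iff_forall_notMem] at hfr
  have hmem : ∀ z ∈ s, z ∈ t → z ∈ interior t := by
    intro z hzs hzt
    by_contra hzi
    exact hfr z ⟨hzs, subset_closure hzt, hzi⟩
  have hmem' : ∀ z ∈ s, z ∉ t → z ∈ interior tᶜ := by
    intro z hzs hzt
    rw [interior_compl, Set.mem_compl_iff]
    intro hcl
    exact hfr z ⟨hzs, hcl, fun hi => hzt (interior_subset hi)⟩
  obtain ⟨x, hxs, hxt⟩ := hxt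
  obtain ⟨y, hys, hyt⟩ := hyt
  obtain ⟨z, _, hz1, hz2⟩ := hs (interior t) (interior tᶜ) isOpen_interior isOpen_interior
    (fun z hz => by
      by_cases h : z ∈ t
      · exact Or.inl (hmem z hz h)
      · exact Or.inr (hmem' z hz h))
    ⟨x, hxs, hmem x hxs hxt⟩ ⟨y, hys, hmem' y hys hyt⟩
  exact (interior_subset hz2) (interior_subset hz1)

open scoped NNReal in
/-- If a Lipschitz function vanishes on the frontier of `s`, its restriction (by `indicator`)
to `s` is Lipschitz with the same constant. -/
lemma lipschitzWith_indicator {n : ℕ} {u : (Fin n → ℝ) → ℝ} {c : ℝ≥0}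
    (hu : LipschitzWith c u) {s : Set (Fin n → ℝ)}
    (h0 : ∀ z ∈ frontier s, u z = 0) :
    LipschitzWith c (s.indicator u) := by
  have key : ∀ x y : Fin n → ℝ, x ∈ s → y ∉ s → |u x| ≤ c * dist x y := by
    intro x y hx hy
    obtain ⟨z, hzseg, hzfr⟩ := preconn_inter_frontier (convex_segment x y).isPreconnected
      ⟨x, left_mem_segment ℝ x y, hx⟩ ⟨y, right_mem_segment ℝ x y, hy⟩
    have hz0 : u z = 0 := h0 z hzfr
    have hdz : dist x z ≤ dist x y := by
      obtain ⟨a, b, ha, hb, hab, rfl⟩ := hzseg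
      have hxz : x - (a • x + b • y) = b • (x - y) := by
        have hab' : a = 1 - b := by linarith
        rw [hab', sub_smul, one_smul, smul_sub]
        abel
      rw [dist_eq_norm, dist_eq_norm, hxz, norm_smul, Real.norm_eq_abs, abs_of_nonneg hb]
      nlinarith [norm_nonneg (x - y), (by linarith : b ≤ 1)]
    calc |u x| = dist (u x) (u z) := by rw [hz0, Real.dist_eq, sub_zero]
      _ ≤ c * dist x z := hu.dist_le_mul x z
      _ ≤ c * dist x y := by gcongr
  apply LipschitzWith.of_dist_le_mul
  intro x y
  by_cases hx : x ∈ s <;> by_cases hy : y ∈ s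
  · rw [Set.indicator_of_mem hx, Set.indicator_of_mem hy]; exact hu.dist_le_mul x y
  · rw [Set.indicator_of_mem hx, Set.indicator_of_notMem hy, Real.dist_eq, sub_zero]
    exact key x y hx hy
  · rw [Set.indicator_of_notMem hx, Set.indicator_of_mem hy, dist_comm, Real.dist_eq, sub_zero,
      dist_comm]
    exact key y x hy hx
  · rw [Set.indicator_of_notMem hx, Set.indicator_of_notMem hy, dist_self]
    positivity

/-- The core analytic inequality: superadditivity (reverse Minkowski) for the
Lorentz-type integral functional when `q ≤ p`. -/
lemma key_sum {p q : ℝ} (hp : 1 < p) (hq : 1 ≤ q) (hqp : q ≤ p)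
    {k : ℕ} (d : Fin k → ℝ → ℝ≥0∞) (hd : ∀ i, Measurable (d i)) :
    ∑ i, (ENNReal.ofReal p *
        ∫⁻ s in Ioi (0:ℝ), ENNReal.ofReal (s ^ (q-1)) * d i s ^ (q/p)) ^ (p/q)
      ≤ (ENNReal.ofReal p *
        ∫⁻ s in Ioi (0:ℝ), ENNReal.ofReal (s ^ (q-1)) * (∑ j, d j s) ^ (q/p)) ^ (p/q) := by
  have hq0 : (0:ℝ) < q := by linarith
  have hp0 : (0:ℝ) < p := by linarith
  have hpq0 : (0:ℝ) ≤ p/q := by positivity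
  simp only [ENNReal.mul_rpow_of_nonneg _ _ hpq0]
  rw [← Finset.mul_sum]
  refine mul_le_mul_right ?_ _
  set w : ℝ → ℝ≥0∞ := fun s => ENNReal.ofReal (s ^ (q-1)) with hw
  change ∑ i, (∫⁻ s in Ioi (0:ℝ), w s * d i s ^ (q/p)) ^ (p/q) ≤
    (∫⁻ s in Ioi (0:ℝ), w s * (∑ j, d j s) ^ (q/p)) ^ (p/q)
  set r := q / p with hrdef
  have hr0 : (0:ℝ) < r := by positivity
  have hinv : p / q = 1 / r := by rw [hrdef, one_div_div]
  have hwmeas : Measurable w :=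
    ENNReal.measurable_ofReal.comp (Real.continuous_rpow_const (by linarith)).measurable
  have hDmeas : Measurable (fun s => ∑ j, d j s) := by
    apply Finset.measurable_sum
    exact fun j _ => hd j
  set D := fun s => ∑ j, d j s with hDdef
  have hdle : ∀ i s, d i s ≤ D s := by
    intro i s
    simp only [hDdef]
    exact Finset.single_le_sum (f := fun j => d j s) (fun j _ => zero_le) (Finset.mem_univ i)
  set C := ∫⁻ s in Ioi (0:ℝ), w s * D s ^ r with hC
  rw [hinv]
  rcases eq_or_lt_of_le hqp with rfl | hlt
  · -- q = p : equality case
    have hr1 : r = 1 := div_self hq0.ne'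
    simp only [hC, hDdef, hr1, ENNReal.rpow_one, one_div_one]
    rw [← lintegral_finset_sum _ (f := fun i s => w s * d i s) (fun i _ => hwmeas.mul (hd i))]
    refine le_of_eq (lintegral_congr fun s => ?_)
    rw [← Finset.mul_sum]
  have hr1 : r < 1 := (div_lt_one hp0).mpr hlt
  by_cases hCtop : C = ⊤
  · rw [hCtop, ENNReal.top_rpow_of_pos (by positivity)]
    exact le_top
  have haeD : ∀ᵐ s ∂(volume.restrict (Ioi (0:ℝ))), D s ≠ ⊤ := by
    have h1 := ae_lt_top (hwmeas.mul (ENNReal.continuous_rpow_const.measurable.comp hDmeas)) hCtop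
    have h2 : ∀ᵐ s ∂(volume.restrict (Ioi (0:ℝ))), s ∈ Ioi (0:ℝ) :=
      ae_restrict_mem measurableSet_Ioi
    filter_upwards [h1, h2] with s hs1 hs2
    intro hDt
    have hw0 : w s ≠ 0 := (ENNReal.ofReal_pos.mpr (Real.rpow_pos_of_pos hs2 _)).ne'
    simp only [Pi.mul_apply, Function.comp_apply] at hs1
    rw [hDt, ENNReal.top_rpow_of_pos hr0, ENNReal.mul_top hw0] at hs1
    exact absurd hs1 (lt_irrefl ⊤)
  by_cases hC0 : C = 0
  · have hzero : ∀ i, (∫⁻ s in Ioi (0:ℝ), w s * d i s ^ r) = 0 := by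
      intro i
      refine le_antisymm ?_ zero_le
      rw [← hC0]
      exact lintegral_mono fun s =>
        mul_le_mul_right (ENNReal.rpow_le_rpow (hdle i s) hr0.le) _
    have hterm : ∀ i : Fin k, ((∫⁻ s in Ioi (0:ℝ), w s * d i s ^ r)) ^ (1/r) = 0 := fun i => by
      rw [hzero i, ENNReal.zero_rpow_of_pos (by positivity)]
    simp only [hterm, Finset.sum_const_zero]
    exact zero_le
  -- main case
  have hconj : Real.HolderConjugate (1/(1-r)) (1/r) :=
    Real.holderConjugate_iff.mpr ⟨by rw [lt_div_iff₀ (by linarith)]; linarith,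
     by rw [one_div, one_div, inv_inv, inv_inv]; ring⟩
  set G : Fin k → ℝ → ℝ≥0∞ := fun i s => w s * d i s * D s ^ (r-1) with hG
  have hGmeas : ∀ i, Measurable (G i) := fun i =>
    (hwmeas.mul (hd i)).mul (ENNReal.continuous_rpow_const.measurable.comp hDmeas)
  set A : Fin k → ℝ≥0∞ := fun i => ∫⁻ s in Ioi (0:ℝ), G i s with hA
  have step1 : ∀ i, (∫⁻ s in Ioi (0:ℝ), w s * d i s ^ r) ≤ C ^ (1-r) * (A i) ^ r := by
    intro i
    have hFmeas : Measurable (fun s => (w s * D s ^ r) ^ (1-r)) :=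
      ENNReal.continuous_rpow_const.measurable.comp
        (hwmeas.mul (ENNReal.continuous_rpow_const.measurable.comp hDmeas))
    have hGr : Measurable (fun s => (G i s) ^ r) :=
      ENNReal.continuous_rpow_const.measurable.comp (hGmeas i)
    have holder := ENNReal.lintegral_mul_le_Lp_mul_Lq (volume.restrict (Ioi (0:ℝ))) hconj
      hFmeas.aemeasurable hGr.aemeasurable
    simp only [Pi.mul_apply] at holder
    calc (∫⁻ s in Ioi (0:ℝ), w s * d i s ^ r)
        ≤ ∫⁻ s in Ioi (0:ℝ), ((w s * D s ^ r) ^ (1-r)) * ((G i s) ^ r) := by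
          refine lintegral_mono_ae ?_
          have h2 : ∀ᵐ s ∂(volume.restrict (Ioi (0:ℝ))), s ∈ Ioi (0:ℝ) :=
            ae_restrict_mem measurableSet_Ioi
          filter_upwards [haeD, h2] with s hDt hs
          by_cases hd0 : D s = 0
          · have hdz : d i s = 0 := le_antisymm (hd0 ▸ hdle i s) zero_le
            rw [hdz, ENNReal.zero_rpow_of_pos hr0, mul_zero]
            exact zero_le
          · apply le_of_eq
            have hw0 : w s ≠ 0 := (ENNReal.ofReal_pos.mpr (Real.rpow_pos_of_pos hs _)).ne'
            have hwt : w s ≠ ⊤ := ENNReal.ofReal_ne_top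
            have e1 : (w s * D s ^ r) ^ (1-r) = w s ^ (1-r) * D s ^ (r*(1-r)) := by
              rw [ENNReal.mul_rpow_of_nonneg _ _ (by linarith : (0:ℝ) ≤ 1-r),
                ← ENNReal.rpow_mul]
            have e2 : (G i s) ^ r = w s ^ r * d i s ^ r * D s ^ ((r-1)*r) := by
              simp only [hG]
              rw [ENNReal.mul_rpow_of_nonneg _ _ hr0.le,
                ENNReal.mul_rpow_of_nonneg _ _ hr0.le, ← ENNReal.rpow_mul]
            rw [e1, e2]
            have e3 : w s ^ (1-r) * D s ^ (r*(1-r)) * (w s ^ r * d i s ^ r * D s ^ ((r-1)*r))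
                = (w s ^ (1-r) * w s ^ r) * (D s ^ (r*(1-r)) * D s ^ ((r-1)*r)) * d i s ^ r := by
              ring
            rw [e3, ← ENNReal.rpow_add _ _ hw0 hwt, ← ENNReal.rpow_add _ _ hd0 hDt,
              show (1-r)+r = (1:ℝ) by ring, show r*(1-r)+((r-1)*r) = (0:ℝ) by ring,
              ENNReal.rpow_one, ENNReal.rpow_zero, mul_one]
      _ ≤ (∫⁻ s in Ioi (0:ℝ), ((w s * D s ^ r) ^ (1-r)) ^ (1/(1-r))) ^ (1/(1/(1-r)))
            * (∫⁻ s in Ioi (0:ℝ), ((G i s) ^ r) ^ (1/r)) ^ (1/(1/r)) := holder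
      _ = C ^ (1-r) * A i ^ r := by
          rw [one_div_one_div, one_div_one_div]
          congr 1
          · congr 1
            refine lintegral_congr fun s => ?_
            rw [← ENNReal.rpow_mul, mul_one_div_cancel (by linarith : (1:ℝ)-r ≠ 0),
              ENNReal.rpow_one]
          · congr 1
            refine lintegral_congr fun s => ?_
            rw [← ENNReal.rpow_mul, mul_one_div_cancel hr0.ne', ENNReal.rpow_one]
  have step2 : ∀ i, ((∫⁻ s in Ioi (0:ℝ), w s * d i s ^ r)) ^ (1/r) ≤ C ^ ((1-r)/r) * A i := by
    intro i
    calc ((∫⁻ s in Ioi (0:ℝ), w s * d i s ^ r)) ^ (1/r)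
        ≤ (C ^ (1-r) * A i ^ r) ^ (1/r) :=
          ENNReal.rpow_le_rpow (step1 i) (by positivity)
      _ = C ^ ((1-r)/r) * A i := by
          rw [ENNReal.mul_rpow_of_nonneg _ _ (by positivity), ← ENNReal.rpow_mul,
            ← ENNReal.rpow_mul, mul_one_div, mul_one_div_cancel hr0.ne', ENNReal.rpow_one]
  have step3 : ∑ i, A i = C := by
    simp only [hA]
    rw [← lintegral_finset_sum _ (fun i _ => hGmeas i)]
    refine lintegral_congr_ae ?_
    filter_upwards [haeD] with s hDt
    by_cases hd0 : D s = 0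
    · have hdz : ∀ j, d j s = 0 := fun j => le_antisymm (hd0 ▸ hdle j s) zero_le
      simp only [hG, hd0, ENNReal.zero_rpow_of_pos hr0, mul_zero]
      rw [Finset.sum_eq_zero]
      intro j _
      rw [hdz j, mul_zero, zero_mul]
    · have hsum : ∑ j, G j s = w s * D s * D s ^ (r-1) := by
        simp only [hG]
        rw [← Finset.sum_mul, ← Finset.mul_sum]
      rw [hsum, mul_assoc]
      congr 1
      nth_rewrite 1 [← ENNReal.rpow_one (D s)]
      rw [← ENNReal.rpow_add _ _ hd0 hDt]
      norm_num
  calc ∑ i, ((∫⁻ s in Ioi (0:ℝ), w s * d i s ^ r)) ^ (1/r)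
      ≤ ∑ i, (C ^ ((1-r)/r) * A i) := Finset.sum_le_sum fun i _ => step2 i
    _ = C ^ ((1-r)/r) * ∑ i, A i := by rw [← Finset.mul_sum]
    _ = C ^ ((1-r)/r) * C := by rw [step3]
    _ = C ^ (1/r) := by
        nth_rewrite 2 [← ENNReal.rpow_one C]
        rw [← ENNReal.rpow_add _ _ hC0 hCtop]
        congr 1
        field_simp
        ring

/-- Superadditivity of the `p,q`-capacitance over disjoint open sets when `1 ≤ q ≤ p`. -/
theorem capacitance_superadditive_q_le_p {n : ℕ} (p q : ℝ)
    (hp : 1 < p) (hq : 1 ≤ q) (hqp : q ≤ p)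
    (k : ℕ) (Ω : Fin k → Set (Fin n → ℝ)) (K : Fin k → Set (Fin n → ℝ))
    (hΩ : ∀ i, IsOpen (Ω i)) (hdisj : Pairwise (Function.onFun Disjoint Ω))
    (hK : ∀ i, IsCompact (K i)) (hKΩ : ∀ i, K i ⊆ Ω i) :
    ∑ i, capacitance n p (ENNReal.ofReal q) (K i) (Ω i) ≤
      capacitance n p (ENNReal.ofReal q) (⋃ i, K i) (⋃ i, Ω i) := by
  have hq0 : (0:ℝ) ≤ q := by linarith
  simp only [capacitance]
  refine le_iInf₂ fun u hu => ?_
  obtain ⟨⟨c, hlip⟩, hcs, hsupp, hint⟩ := hu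
  -- `u` vanishes on the frontier of each `Ω i`.
  have hfr0 : ∀ i, ∀ z ∈ frontier (Ω i), u z = 0 := by
    intro i z hz
    apply image_eq_zero_of_notMem_tsupport
    intro hzs
    have hzU : z ∈ ⋃ j, Ω j := hsupp hzs
    obtain ⟨j, hj⟩ := mem_iUnion.mp hzU
    rcases eq_or_ne j i with rfl | hji
    · rw [(hΩ j).frontier_eq] at hz
      exact hz.2 hj
    · have h1 : z ∈ closure (Ω i) := frontier_subset_closure hz
      exact (Set.disjoint_left.mp ((hdisj hji.symm).closure_left (hΩ j)) h1) hj
  -- admissibility of the restricted functions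
  have hss : ∀ i, Function.support ((Ω i).indicator u) ⊆ Function.support u := by
    intro i x hx
    by_cases hxi : x ∈ Ω i
    · rwa [Function.mem_support, Set.indicator_of_mem hxi] at hx
    · rw [Function.mem_support, Set.indicator_of_notMem hxi] at hx
      exact absurd rfl hx
  have hadm : ∀ i, (Ω i).indicator u ∈ admissible (K i) (Ω i) := by
    intro i
    refine ⟨⟨c, lipschitzWith_indicator hlip (hfr0 i)⟩, hcs.mono (hss i), ?_, ?_⟩
    · -- tsupport ⊆ Ω i
      intro x hx
      have h1 : x ∈ closure (Ω i) :=
        closure_mono Set.support_indicator_subset hx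
      have h2 : x ∈ ⋃ j, Ω j := hsupp (closure_mono (hss i) hx)
      obtain ⟨j, hj⟩ := mem_iUnion.mp h2
      rcases eq_or_ne j i with rfl | hji
      · exact hj
      · exact absurd hj (Set.disjoint_left.mp ((hdisj hji.symm).closure_left (hΩ j)) h1)
    · -- K i ⊆ interior {1 ≤ indicator}
      have hKint : K i ⊆ interior {x | 1 ≤ u x} := (subset_iUnion K i).trans hint
      intro x hx
      have hmem : x ∈ Ω i ∩ interior {y | 1 ≤ u y} := ⟨hKΩ i hx, hKint hx⟩
      refine interior_maximal ?_ ((hΩ i).inter isOpen_interior) hmem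
      rintro y ⟨hy1, hy2⟩
      show (1:ℝ) ≤ (Ω i).indicator u y
      rw [Set.indicator_of_mem hy1]
      have hy3 : y ∈ {y | 1 ≤ u y} := interior_subset hy2
      exact hy3
  -- the gradients agree on each `Ω i`
  have hfd : ∀ i, ∀ x ∈ Ω i, fderiv ℝ ((Ω i).indicator u) x = fderiv ℝ u x := by
    intro i x hx
    apply Filter.EventuallyEq.fderiv_eq
    filter_upwards [(hΩ i).mem_nhds hx] with y hy
    exact Set.indicator_of_mem hy u
  set g : (Fin n → ℝ) → ℝ := fun x => ‖fderiv ℝ u x‖ with hg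
  set d : Fin k → ℝ → ℝ≥0∞ := fun i s => volume ({x | s < |g x|} ∩ Ω i) with hd
  have hdmeas : ∀ i, Measurable (d i) := by
    intro i
    apply Antitone.measurable
    intro s t hst
    exact measure_mono (inter_subset_inter_left _
      (fun x (hx : t < |g x|) => lt_of_le_of_lt hst hx))
  have hgmeas : Measurable g := (measurable_fderiv ℝ u).norm
  have hmeasset : ∀ s : ℝ, MeasurableSet {x | s < |g x|} :=
    fun s => measurableSet_lt measurable_const hgmeas.abs
  have hdistrib_i : ∀ i, distribFn (volume.restrict (Ω i))
      (fun x => ‖fderiv ℝ ((Ω i).indicator u) x‖) = d i := by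
    intro i
    funext s
    unfold distribFn
    rw [Measure.restrict_apply' (hΩ i).measurableSet]
    simp only [hd]
    congr 1
    ext x
    simp only [mem_inter_iff, mem_setOf_eq]
    exact and_congr_left fun hx => by rw [hfd i x hx]
  have hdistrib_union : distribFn (volume.restrict (⋃ j, Ω j)) g = fun s => ∑ j, d j s := by
    funext s
    unfold distribFn
    rw [Measure.restrict_apply' (MeasurableSet.iUnion fun j => (hΩ j).measurableSet),
      inter_iUnion, measure_iUnion
        (fun a b hab => ((hdisj hab).mono inter_subset_right inter_subset_right))
        (fun j => (hmeasset s).inter (hΩ j).measurableSet), tsum_fintype]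
  have hlor : ∀ (μ : Measure (Fin n → ℝ)) (f : (Fin n → ℝ) → ℝ),
      lorentzNorm μ p (ENNReal.ofReal q) f ^ p
        = (ENNReal.ofReal p *
            ∫⁻ s in Ioi (0:ℝ), ENNReal.ofReal (s ^ (q-1)) * distribFn μ f s ^ (q/p)) ^ (p/q) := by
    intro μ f
    unfold lorentzNorm
    rw [if_neg ENNReal.ofReal_ne_top, ENNReal.toReal_ofReal hq0,
      ← ENNReal.rpow_mul, one_div_mul_eq_div]
  calc ∑ i, ⨅ v ∈ admissible (K i) (Ω i),
        lorentzNorm (volume.restrict (Ω i)) p (ENNReal.ofReal q)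
          (fun x => ‖fderiv ℝ v x‖) ^ p
      ≤ ∑ i, lorentzNorm (volume.restrict (Ω i)) p (ENNReal.ofReal q)
          (fun x => ‖fderiv ℝ ((Ω i).indicator u) x‖) ^ p :=
        Finset.sum_le_sum fun i _ => iInf₂_le ((Ω i).indicator u) (hadm i)
    _ = ∑ i, (ENNReal.ofReal p *
          ∫⁻ s in Ioi (0:ℝ), ENNReal.ofReal (s ^ (q-1)) * d i s ^ (q/p)) ^ (p/q) := by
        refine Finset.sum_congr rfl fun i _ => ?_
        rw [hlor, hdistrib_i i]
    _ ≤ (ENNReal.ofReal p *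
          ∫⁻ s in Ioi (0:ℝ), ENNReal.ofReal (s ^ (q-1)) * (∑ j, d j s) ^ (q/p)) ^ (p/q) :=
        key_sum hp hq hqp d hdmeas
    _ = lorentzNorm (volume.restrict (⋃ i, Ω i)) p (ENNReal.ofReal q) g ^ p := by
        rw [hlor, hdistrib_union]
end

section
/- Let 1 < p < q < ∞. If Ω₁, …, Ω_k are pairwise disjoint open subsets of ℝⁿ and K_i are compact subsets of Ω_i, then cap_{p,q}(⋃_{i=1}^k K_i, ⋃_{i=1}^k Ω_i)^{q/p} ≥ ∑_{i=1}^k cap_{p,q}(K_i, Ω_i)^{q/p}. -/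
open MeasureTheory Set
open scoped ENNReal

/-- A segment from a point of an open set to a point outside it meets the frontier. -/
lemma segment_inter_frontier {E : Type*} [NormedAddCommGroup E] [NormedSpace ℝ E]
    {S : Set E} (hS : IsOpen S) {x y : E} (hx : x ∈ S) (hy : y ∉ S) :
    ∃ z ∈ segment ℝ x y, z ∈ frontier S := by
  by_cases hyc : y ∈ closure S
  · exact ⟨y, right_mem_segment ℝ x y, hyc, by rwa [hS.interior_eq]⟩
  · by_contra h
    push_neg at h
    have hsub : segment ℝ x y ⊆ S ∪ (closure S)ᶜ := by
      intro z hz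
      by_cases hzS : z ∈ S
      · exact Or.inl hzS
      · refine Or.inr fun hzc => h z hz ⟨hzc, by rwa [hS.interior_eq]⟩
    obtain ⟨z, -, hz1, hz2⟩ := (convex_segment x y).isPreconnected S (closure S)ᶜ hS
      isClosed_closure.isOpen_compl hsub ⟨x, left_mem_segment ℝ x y, hx⟩
      ⟨y, right_mem_segment ℝ x y, hyc⟩
    exact hz2 (subset_closure hz1)

/-- `∑ aᵢ^r ≤ (∑ aᵢ)^r` in `ℝ≥0∞` for `r ≥ 1`. -/
lemma sum_rpow_le_rpow_sum {ι : Type*} (s : Finset ι) (f : ι → ℝ≥0∞) {r : ℝ} (hr : 1 ≤ r) :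
    ∑ i ∈ s, f i ^ r ≤ (∑ i ∈ s, f i) ^ r := by
  induction s using Finset.cons_induction with
  | empty => simp [ENNReal.zero_rpow_of_pos (zero_lt_one.trans_le hr)]
  | cons a s ha ih =>
    rw [Finset.sum_cons, Finset.sum_cons]
    calc f a ^ r + ∑ i ∈ s, f i ^ r ≤ f a ^ r + (∑ i ∈ s, f i) ^ r := by gcongr
      _ ≤ _ := ENNReal.add_rpow_le_rpow_add _ _ hr

lemma lorentzNorm_pow {α : Type*} [MeasurableSpace α] (μ : Measure α) (p q : ℝ)
    (hq0 : 0 < q) (f : α → ℝ) :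
    lorentzNorm μ p (ENNReal.ofReal q) f ^ q =
      ENNReal.ofReal p *
        ∫⁻ s in Ioi (0 : ℝ), ENNReal.ofReal (s ^ (q - 1)) * distribFn μ f s ^ (q / p) := by
  rw [lorentzNorm, if_neg ENNReal.ofReal_ne_top, ENNReal.toReal_ofReal hq0.le,
    ← ENNReal.rpow_mul, one_div, inv_mul_cancel₀ hq0.ne', ENNReal.rpow_one]

/-- Superadditivity of the `q/p`-th power of the `p,q`-capacitance over disjoint open
sets when `1 < p < q < ∞`. -/
theorem capacitance_superadditive_p_lt_q {n : ℕ} (p q : ℝ)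
    (hp : 1 < p) (hpq : p < q)
    (k : ℕ) (Ω : Fin k → Set (Fin n → ℝ)) (K : Fin k → Set (Fin n → ℝ))
    (hΩ : ∀ i, IsOpen (Ω i)) (hdisj : Pairwise (Function.onFun Disjoint Ω))
    (hK : ∀ i, IsCompact (K i)) (hKΩ : ∀ i, K i ⊆ Ω i) :
    ∑ i, capacitance n p (ENNReal.ofReal q) (K i) (Ω i) ^ (q / p) ≤
      capacitance n p (ENNReal.ofReal q) (⋃ i, K i) (⋃ i, Ω i) ^ (q / p) := by
  have hp0 : (0:ℝ) < p := zero_lt_one.trans hp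
  have hq0 : (0:ℝ) < q := hp0.trans hpq
  have hqp1 : 1 ≤ q / p := (one_le_div hp0).mpr hpq.le
  have hqp0 : (0:ℝ) < q / p := zero_lt_one.trans_le hqp1
  set q' := ENNReal.ofReal q with hq'def
  -- Key pointwise bound for every admissible `u` for the union conductor.
  have key : ∀ u ∈ admissible (⋃ i, K i) (⋃ i, Ω i),
      ∑ i, capacitance n p q' (K i) (Ω i) ^ (q / p) ≤
        (lorentzNorm (volume.restrict (⋃ i, Ω i)) p q' (fun x => ‖fderiv ℝ u x‖) ^ p)
          ^ (q / p) := by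
    rintro u ⟨⟨c, hlip⟩, hcs, hsupp, hint⟩
    -- the frontier of each `Ω i` avoids the whole union
    have hfrU : ∀ i, ∀ z ∈ frontier (Ω i), z ∉ ⋃ j, Ω j := by
      intro i z hz hzU
      obtain ⟨j, hj⟩ := mem_iUnion.mp hzU
      rcases eq_or_ne j i with rfl | hne
      · exact ((hΩ j).frontier_eq ▸ hz).2 hj
      · have hzc : z ∈ closure (Ω i) := frontier_subset_closure hz
        obtain ⟨w, hw1, hw2⟩ := _root_.mem_closure_iff.mp hzc (Ω j) (hΩ j) hj
        exact (hdisj hne).le_bot ⟨hw1, hw2⟩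
    have hfr0 : ∀ i, ∀ z ∈ frontier (Ω i), u z = 0 := fun i z hz =>
      image_eq_zero_of_notMem_tsupport fun hmem => hfrU i z hz (hsupp hmem)
    -- the truncated functions
    set v : Fin k → (Fin n → ℝ) → ℝ := fun i => (Ω i).indicator u with hvdef
    -- Lipschitz
    have hvlip : ∀ i, LipschitzWith c (v i) := by
      intro i
      rw [lipschitzWith_iff_dist_le_mul]
      intro x y
      have main : ∀ x y : Fin n → ℝ, x ∈ Ω i → y ∉ Ω i →
          dist (v i x) (v i y) ≤ c * dist x y := by
        intro x y hx hy
        obtain ⟨z, hzseg, hzfr⟩ := segment_inter_frontier (hΩ i) hx hy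
        have hz0 : u z = 0 := hfr0 i z hzfr
        have hdz : dist x z ≤ dist x y := by
          have := dist_add_dist_of_mem_segment hzseg
          nlinarith [dist_nonneg (x := z) (y := y)]
        have : dist (v i x) (v i y) = dist (u x) (u z) := by
          rw [hvdef]
          simp only [indicator_of_mem hx, indicator_of_notMem hy, hz0]
        rw [this]
        calc dist (u x) (u z) ≤ c * dist x z := hlip.dist_le_mul x z
          _ ≤ c * dist x y := mul_le_mul_of_nonneg_left hdz c.2
      by_cases hx : x ∈ Ω i <;> by_cases hy : y ∈ Ω i
      · simp only [hvdef, indicator_of_mem hx, indicator_of_mem hy]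
        exact hlip.dist_le_mul x y
      · exact main x y hx hy
      · rw [dist_comm, dist_comm x y]; exact main y x hy hx
      · simp only [hvdef, indicator_of_notMem hx, indicator_of_notMem hy, dist_self]
        positivity
    -- support facts
    have hvsupp : ∀ i, tsupport (v i) ⊆ Ω i := by
      intro i z hz
      have h1 : tsupport (v i) ⊆ closure (Ω i) := closure_mono (support_indicator_subset)
      have h2 : tsupport (v i) ⊆ tsupport u := closure_mono fun x hx =>
        by
          simp only [hvdef, Function.mem_support] at hx
          intro h0
          exact hx (by simp [indicator, h0])
      by_contra hzn
      exact hfrU i z ⟨h1 hz, by rwa [(hΩ i).interior_eq]⟩ (hsupp (h2 hz))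
    have hvcs : ∀ i, HasCompactSupport (v i) := fun i =>
      hcs.mono fun x hx h0 => hx (by simp [hvdef, Set.indicator_apply, h0])
    have hvint : ∀ i, K i ⊆ interior {x | 1 ≤ v i x} := by
      intro i
      have hopen : IsOpen (Ω i ∩ interior {x | 1 ≤ u x}) :=
        (hΩ i).inter isOpen_interior
      have hsub : Ω i ∩ interior {x | 1 ≤ u x} ⊆ {x | 1 ≤ v i x} := by
        rintro x ⟨hx1, hx2⟩
        simpa [hvdef, indicator_of_mem hx1] using interior_subset hx2
      have : K i ⊆ Ω i ∩ interior {x | 1 ≤ u x} :=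
        subset_inter (hKΩ i) ((subset_iUnion K i).trans hint)
      exact this.trans (interior_maximal hsub hopen)
    have hvadm : ∀ i, v i ∈ admissible (K i) (Ω i) := fun i =>
      ⟨⟨c, hvlip i⟩, hvcs i, hvsupp i, hvint i⟩
    -- distribution function rewrites
    set A : ℝ → Set (Fin n → ℝ) := fun s => {x | s < ‖fderiv ℝ u x‖} with hAdef
    have hAmeas : ∀ s, MeasurableSet (A s) := fun s =>
      measurableSet_lt measurable_const (measurable_fderiv ℝ u).norm
    have hvd : ∀ i s, distribFn (volume.restrict (Ω i)) (fun x => ‖fderiv ℝ (v i) x‖) s =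
        volume (A s ∩ Ω i) := by
      intro i s
      rw [distribFn, Measure.restrict_apply' (hΩ i).measurableSet]
      congr 1
      ext x
      simp only [mem_inter_iff, mem_setOf_eq, hAdef, abs_norm]
      constructor
      · rintro ⟨h1, h2⟩
        refine ⟨?_, h2⟩
        have : fderiv ℝ (v i) x = fderiv ℝ u x :=
          Filter.EventuallyEq.fderiv_eq (by
            filter_upwards [(hΩ i).mem_nhds h2] with y hy
            exact indicator_of_mem hy u)
        rwa [this] at h1
      · rintro ⟨h1, h2⟩
        refine ⟨?_, h2⟩
        have : fderiv ℝ (v i) x = fderiv ℝ u x :=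
          Filter.EventuallyEq.fderiv_eq (by
            filter_upwards [(hΩ i).mem_nhds h2] with y hy
            exact indicator_of_mem hy u)
        rwa [this]
    have hUd : ∀ s, distribFn (volume.restrict (⋃ j, Ω j)) (fun x => ‖fderiv ℝ u x‖) s =
        volume (A s ∩ ⋃ j, Ω j) := by
      intro s
      rw [distribFn, Measure.restrict_apply' (isOpen_iUnion hΩ).measurableSet]
      congr 1
      ext x
      simp [hAdef, abs_norm]
    -- per-i capacitance bound
    have hcap : ∀ i, capacitance n p q' (K i) (Ω i) ^ (q / p) ≤
        ENNReal.ofReal p * ∫⁻ s in Ioi (0:ℝ),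
          ENNReal.ofReal (s ^ (q - 1)) * volume (A s ∩ Ω i) ^ (q / p) := by
      intro i
      have h1 : capacitance n p q' (K i) (Ω i) ≤
          lorentzNorm (volume.restrict (Ω i)) p q' (fun x => ‖fderiv ℝ (v i) x‖) ^ p :=
        iInf₂_le (v i) (hvadm i)
      calc capacitance n p q' (K i) (Ω i) ^ (q / p)
          ≤ (lorentzNorm (volume.restrict (Ω i)) p q' (fun x => ‖fderiv ℝ (v i) x‖) ^ p)
            ^ (q / p) := ENNReal.rpow_le_rpow h1 hqp0.le
        _ = lorentzNorm (volume.restrict (Ω i)) p q' (fun x => ‖fderiv ℝ (v i) x‖) ^ q := by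
            rw [← ENNReal.rpow_mul, mul_div_cancel₀ q hp0.ne']
        _ = ENNReal.ofReal p * ∫⁻ s in Ioi (0:ℝ),
              ENNReal.ofReal (s ^ (q - 1)) * volume (A s ∩ Ω i) ^ (q / p) := by
            rw [hq'def, lorentzNorm_pow _ _ _ hq0]
            congr 1
            refine lintegral_congr fun s => ?_
            rw [hvd i s]
    -- sum the bounds
    calc ∑ i, capacitance n p q' (K i) (Ω i) ^ (q / p)
        ≤ ∑ i, ENNReal.ofReal p * ∫⁻ s in Ioi (0:ℝ),
            ENNReal.ofReal (s ^ (q - 1)) * volume (A s ∩ Ω i) ^ (q / p) :=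
          Finset.sum_le_sum fun i _ => hcap i
      _ = ENNReal.ofReal p * ∑ i, ∫⁻ s in Ioi (0:ℝ),
            ENNReal.ofReal (s ^ (q - 1)) * volume (A s ∩ Ω i) ^ (q / p) := by
          rw [Finset.mul_sum]
      _ = ENNReal.ofReal p * ∫⁻ s in Ioi (0:ℝ), ∑ i,
            ENNReal.ofReal (s ^ (q - 1)) * volume (A s ∩ Ω i) ^ (q / p) := by
          congr 1
          refine (lintegral_finset_sum _ fun i _ => ?_).symm
          have hmono : Antitone fun s => volume (A s ∩ Ω i) := fun s t hst =>
            measure_mono (inter_subset_inter_left _ fun x hx => hst.trans_lt hx)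
          exact ((Real.continuous_rpow_const (by linarith)).measurable.ennreal_ofReal).mul
            (ENNReal.continuous_rpow_const.measurable.comp hmono.measurable)
      _ ≤ ENNReal.ofReal p * ∫⁻ s in Ioi (0:ℝ),
            ENNReal.ofReal (s ^ (q - 1)) * volume (A s ∩ ⋃ j, Ω j) ^ (q / p) := by
          gcongr with s
          rw [← Finset.mul_sum]
          gcongr
          calc ∑ i, volume (A s ∩ Ω i) ^ (q / p)
              ≤ (∑ i, volume (A s ∩ Ω i)) ^ (q / p) :=
                sum_rpow_le_rpow_sum _ _ hqp1
            _ = volume (A s ∩ ⋃ j, Ω j) ^ (q / p) := by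
                rw [inter_iUnion, measure_iUnion ?_ fun i => (hAmeas s).inter
                  (hΩ i).measurableSet, tsum_fintype]
                exact fun i j hij =>
                  Disjoint.mono inter_subset_right inter_subset_right (hdisj hij)
      _ = (lorentzNorm (volume.restrict (⋃ i, Ω i)) p q' (fun x => ‖fderiv ℝ u x‖) ^ p)
            ^ (q / p) := by
          rw [← ENNReal.rpow_mul, mul_div_cancel₀ q hp0.ne', hq'def,
            lorentzNorm_pow _ _ _ hq0]
          congr 1
          refine (lintegral_congr fun s => ?_).symm
          rw [hUd s]
  -- conclude via the infimum
  have h2 : (∑ i, capacitance n p q' (K i) (Ω i) ^ (q / p)) ^ (p / q) ≤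
      capacitance n p q' (⋃ i, K i) (⋃ i, Ω i) := by
    rw [capacitance]
    refine le_iInf₂ fun u hu => ?_
    calc (∑ i, capacitance n p q' (K i) (Ω i) ^ (q / p)) ^ (p / q)
        ≤ ((lorentzNorm (volume.restrict (⋃ i, Ω i)) p q' (fun x => ‖fderiv ℝ u x‖) ^ p)
            ^ (q / p)) ^ (p / q) :=
          ENNReal.rpow_le_rpow (key u hu) (div_pos hp0 hq0).le
      _ = lorentzNorm (volume.restrict (⋃ i, Ω i)) p q' (fun x => ‖fderiv ℝ u x‖) ^ p := by
          rw [← ENNReal.rpow_mul, show (q / p) * (p / q) = 1 by field_simp, ENNReal.rpow_one]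
  calc ∑ i, capacitance n p q' (K i) (Ω i) ^ (q / p)
      = ((∑ i, capacitance n p q' (K i) (Ω i) ^ (q / p)) ^ (p / q)) ^ (q / p) := by
        rw [← ENNReal.rpow_mul, show (p / q) * (q / p) = 1 by field_simp, ENNReal.rpow_one]
    _ ≤ capacitance n p q' (⋃ i, K i) (⋃ i, Ω i) ^ (q / p) :=
        ENNReal.rpow_le_rpow h2 hqp0.le
end

section
/- Let Ω ⊂ ℝⁿ be open, 1 < p < q < ∞, a > 1, and Φ : [0,∞) → [0,∞) an increasing convex function with Φ(0) = 0. Then for every compactly supported Lipschitz function φ on Ω, with M_t = {|φ| > t}: ∫_0^∞ Φ(t^q cap_{p,q}(closure(M_{at}), M_t)^{q/p}) dt/t ≤ Φ((a−1)^{-q} ‖∇φ‖_{L^{p,q}(Ω, mₙ; ℝⁿ)}^q) · log a. -/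
open MeasureTheory Set
open scoped ENNReal

open scoped NNReal

section Helpers

/-- Superadditivity of lower integral over a countable sum, no measurability needed. -/
lemma tsum_lintegral_le' {α : Type*} [MeasurableSpace α] (μ : Measure α)
    (f : ℤ → α → ℝ≥0∞) :
    ∑' j, ∫⁻ x, f j x ∂μ ≤ ∫⁻ x, ∑' j, f j x ∂μ := by
  rw [ENNReal.tsum_eq_iSup_sum]
  refine iSup_le fun s => ?_
  calc ∑ j ∈ s, ∫⁻ x, f j x ∂μ ≤ ∫⁻ x, ∑ j ∈ s, f j x ∂μ := by
        classical
        induction s using Finset.induction_on with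
        | empty => simp
        | insert j s hj ih =>
          rw [Finset.sum_insert hj]
          refine le_trans (add_le_add_right ih _) ?_
          refine le_trans (MeasureTheory.le_lintegral_add _ _) (le_of_eq ?_)
          congr 1
          funext x
          rw [Finset.sum_insert hj]
    _ ≤ ∫⁻ x, ∑' j, f j x ∂μ :=
        lintegral_mono fun x => ENNReal.sum_le_tsum s

/-- Change of variables `t = c·τ` in a lower integral, no measurability needed. -/
lemma lintegral_cov (c : ℝ) (hc : 0 < c) (f : ℝ → ℝ≥0∞) (S : Set ℝ) (hS : MeasurableSet S) :
    ∫⁻ t in S, f t = ENNReal.ofReal c * ∫⁻ τ in (c * ·) ⁻¹' S, f (c * τ) := by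
  have hc' : c ≠ 0 := hc.ne'
  have hmap : Measure.map (c * ·) (volume.restrict ((c * ·) ⁻¹' S)) =
      (Measure.map (c * ·) volume).restrict S :=
    (Measure.restrict_map (measurable_const_mul c) hS).symm
  have hemb : MeasurableEmbedding (fun x : ℝ => c * x) :=
    (Homeomorph.mulLeft₀ c hc').measurableEmbedding
  calc ∫⁻ t in S, f t
      = ∫⁻ t, f t ∂((ENNReal.ofReal |c| • Measure.map (c * ·) volume).restrict S) := by
        rw [Real.smul_map_volume_mul_left hc']
    _ = ENNReal.ofReal |c| * ∫⁻ t, f t ∂((Measure.map (c * ·) volume).restrict S) := by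
        rw [Measure.restrict_smul, lintegral_smul_measure, smul_eq_mul]
    _ = ENNReal.ofReal c * ∫⁻ τ in (c * ·) ⁻¹' S, f (c * τ) := by
        rw [abs_of_pos hc, ← hmap, hemb.lintegral_map]

/-- Decomposition of `∫_0^∞` into multiplicatively shifted copies of `[1,a)`. -/
lemma lintegral_Ioi_eq_tsum_Ico (a : ℝ) (ha : 1 < a) (f : ℝ → ℝ≥0∞) :
    ∫⁻ t in Ioi (0:ℝ), f t
      = ∑' j : ℤ, ENNReal.ofReal (a ^ j) * ∫⁻ τ in Ico (1:ℝ) a, f (a ^ j * τ) := by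
  have ha0 : (0:ℝ) < a := lt_trans one_pos ha
  have hpow : ∀ j : ℤ, (0:ℝ) < a ^ j := fun j => zpow_pos ha0 j
  have hU : Ioi (0:ℝ) = ⋃ j : ℤ, Ico (a ^ j) (a ^ (j + 1)) := by
    ext t
    simp only [mem_Ioi, mem_iUnion, mem_Ico]
    constructor
    · intro ht
      exact exists_mem_Ico_zpow ht ha
    · rintro ⟨j, h1, _⟩
      exact lt_of_lt_of_le (hpow j) h1
  have hdisj : Pairwise (Function.onFun Disjoint fun j : ℤ => Ico (a ^ j) (a ^ (j + 1)))  := by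
    intro i j hij
    wlog h : i < j generalizing i j
    · exact (this hij.symm (hij.lt_or_gt.resolve_left h)).symm
    refine Set.disjoint_left.2 fun t hti htj => ?_
    have : a ^ (i + 1) ≤ a ^ j := zpow_le_zpow_right₀ ha.le (by omega)
    exact absurd (lt_of_lt_of_le hti.2 this) (not_lt.2 htj.1)
  have hpre : ∀ j : ℤ, ((a ^ j : ℝ) * ·) ⁻¹' Ico (a ^ j) (a ^ (j + 1)) = Ico (1:ℝ) a := by
    intro j
    ext τ
    simp only [mem_preimage, mem_Ico]
    rw [zpow_add_one₀ ha0.ne']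
    constructor
    · rintro ⟨h1, h2⟩
      constructor
      · have := (mul_le_mul_iff_right₀ (hpow j)).1 (by linarith : a ^ j * 1 ≤ a ^ j * τ)
        linarith
      · exact (mul_lt_mul_iff_right₀ (hpow j)).1 h2
    · rintro ⟨h1, h2⟩
      constructor
      · nlinarith [hpow j]
      · nlinarith [hpow j]
  calc ∫⁻ t in Ioi (0:ℝ), f t
      = ∑' j : ℤ, ∫⁻ t in Ico ((a:ℝ) ^ j) (a ^ (j + 1)), f t := by
        rw [hU, Measure.restrict_iUnion hdisj (fun j => measurableSet_Ico),
          lintegral_sum_measure]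
    _ = ∑' j : ℤ, ENNReal.ofReal (a ^ j) * ∫⁻ τ in Ico (1:ℝ) a, f (a ^ j * τ) := by
        refine tsum_congr fun j => ?_
        rw [lintegral_cov (a ^ j) (hpow j) f _ measurableSet_Ico, hpre j]

/-- Superadditivity of a convex function vanishing at `0`, two points. -/
lemma conv_superadd {Φ : ℝ → ℝ} (hΦconv : ConvexOn ℝ (Ici 0) Φ) (hΦ0 : Φ 0 = 0)
    {x y : ℝ} (hx : 0 ≤ x) (hy : 0 ≤ y) : Φ x + Φ y ≤ Φ (x + y) := by
  rcases eq_or_lt_of_le (add_nonneg hx hy) with h | h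
  · have hx0 : x = 0 := by linarith
    have hy0 : y = 0 := by linarith
    simp [hx0, hy0, hΦ0]
  · have hxy : (0:ℝ) < x + y := h
    have h1 : Φ x ≤ (x / (x + y)) * Φ (x + y) := by
      have := hΦconv.2 (mem_Ici.2 le_rfl : (0:ℝ) ∈ Ici 0)
        (mem_Ici.2 (le_of_lt hxy)) (by positivity : 0 ≤ y / (x+y))
        (by positivity : 0 ≤ x / (x+y)) (by field_simp <;> ring)
      have heq : (y / (x + y)) • (0:ℝ) + (x / (x + y)) • (x + y) = x := by
        rw [smul_eq_mul, smul_eq_mul, mul_zero, zero_add, div_mul_cancel₀ _ hxy.ne']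
      rw [heq] at this
      simpa [hΦ0] using this
    have h2 : Φ y ≤ (y / (x + y)) * Φ (x + y) := by
      have := hΦconv.2 (mem_Ici.2 le_rfl : (0:ℝ) ∈ Ici 0)
        (mem_Ici.2 (le_of_lt hxy)) (by positivity : 0 ≤ x / (x+y))
        (by positivity : 0 ≤ y / (x+y)) (by field_simp <;> ring)
      have heq : (x / (x + y)) • (0:ℝ) + (y / (x + y)) • (x + y) = y := by
        rw [smul_eq_mul, smul_eq_mul, mul_zero, zero_add, div_mul_cancel₀ _ hxy.ne']
      rw [heq] at this
      simpa [hΦ0] using this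
    have : Φ x + Φ y ≤ (x / (x+y)) * Φ (x+y) + (y / (x+y)) * Φ (x+y) := add_le_add h1 h2
    calc Φ x + Φ y ≤ (x / (x+y)) * Φ (x+y) + (y / (x+y)) * Φ (x+y) := this
      _ = Φ (x + y) := by field_simp <;> ring
 
/-- Superadditivity of a convex function vanishing at `0` over finite sums. -/
lemma conv_superadd_sum {Φ : ℝ → ℝ} (hΦconv : ConvexOn ℝ (Ici 0) Φ) (hΦ0 : Φ 0 = 0)
    {ι : Type*} (s : Finset ι) (g : ι → ℝ) (hg : ∀ i, 0 ≤ g i) :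
    ∑ i ∈ s, Φ (g i) ≤ Φ (∑ i ∈ s, g i) := by
  classical
  induction s using Finset.induction_on with
  | empty => simp [hΦ0]
  | insert j s hj ih =>
    rw [Finset.sum_insert hj, Finset.sum_insert hj]
    calc Φ (g j) + ∑ i ∈ s, Φ (g i) ≤ Φ (g j) + Φ (∑ i ∈ s, g i) := by linarith
      _ ≤ Φ (g j + ∑ i ∈ s, g i) :=
          conv_superadd hΦconv hΦ0 (hg j) (Finset.sum_nonneg fun i _ => hg i)

/-- `∑ m_j ^ r ≤ (∑ m_j) ^ r` for `r ≥ 1` in `ℝ≥0∞`. -/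
lemma tsum_rpow_le (m : ℤ → ℝ≥0∞) {r : ℝ} (hr : 1 ≤ r) :
    ∑' j, m j ^ r ≤ (∑' j, m j) ^ r := by
  have hr0 : 0 < r := lt_of_lt_of_le one_pos hr
  set M := ∑' j, m j with hM
  rcases eq_or_ne M ⊤ with h | h
  · rw [h, ENNReal.top_rpow_of_pos hr0]; exact le_top
  rcases eq_or_ne M 0 with h0 | h0
  · have : ∀ j, m j = 0 := by
      intro j
      have := ENNReal.le_tsum (f := m) j
      rw [← hM, h0] at this
      simpa using this
    simp [this, ENNReal.zero_rpow_of_pos hr0]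
  have key : ∀ j, m j ^ r ≤ M ^ (r - 1) * m j := by
    intro j
    rcases eq_or_ne (m j) 0 with hj | hj
    · simp [hj, ENNReal.zero_rpow_of_pos hr0]
    have hjt : m j ≠ ⊤ := by
      intro hcon
      exact h (top_le_iff.1 (hcon ▸ ENNReal.le_tsum j))
    calc m j ^ r = m j ^ ((r - 1) + 1) := by ring_nf
      _ = m j ^ (r - 1) * m j := by rw [ENNReal.rpow_add _ _ hj hjt, ENNReal.rpow_one]
      _ ≤ M ^ (r - 1) * m j :=
          mul_le_mul_left (ENNReal.rpow_le_rpow (ENNReal.le_tsum j) (by linarith)) _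
  calc ∑' j, m j ^ r ≤ ∑' j, M ^ (r - 1) * m j := ENNReal.tsum_le_tsum key
    _ = M ^ (r - 1) * M := by rw [ENNReal.tsum_mul_left]
    _ = M ^ r := by
        have : M ^ (r - 1) * M = M ^ ((r - 1) + 1) := by
          rw [ENNReal.rpow_add _ _ h0 h, ENNReal.rpow_one]
        rw [this]; ring_nf

/-- If `h` is Lipschitz and `φ` differentiable at `x`, the (choice-extended) derivative of
`h ∘ φ` is bounded by `K‖Dφ x‖`. -/
lemma norm_fderiv_comp_le {E : Type*} [NormedAddCommGroup E] [NormedSpace ℝ E]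
    {φ : E → ℝ} {h : ℝ → ℝ} {K : ℝ≥0} (hh : LipschitzWith K h)
    {x : E} (hx : DifferentiableAt ℝ φ x) :
    ‖fderiv ℝ (fun y => h (φ y)) x‖ ≤ K * ‖fderiv ℝ φ x‖ := by
  refine le_of_forall_pos_le_add fun ε hε => ?_
  refine norm_fderiv_le_of_lip' ℝ (by positivity) ?_
  have hlip := hx.hasFDerivAt.isLittleO
  have hKpos : (0:ℝ) ≤ K := K.coe_nonneg
  have hsmall := (hlip.def (show (0:ℝ) < ε / (K + 1) by positivity))
  filter_upwards [hsmall] with y hy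
  have h1 : |h (φ y) - h (φ x)| ≤ K * |φ y - φ x| := by
    have := hh.dist_le_mul (φ y) (φ x)
    simpa [Real.dist_eq] using this
  have h2 : |φ y - φ x| ≤ ‖fderiv ℝ φ x‖ * ‖y - x‖ + (ε / (K + 1)) * ‖y - x‖ := by
    have h3 : ‖φ y - φ x - fderiv ℝ φ x (y - x)‖ ≤ (ε / (K + 1)) * ‖y - x‖ := by
      simpa using hy
    have h4 : ‖fderiv ℝ φ x (y - x)‖ ≤ ‖fderiv ℝ φ x‖ * ‖y - x‖ :=
      (fderiv ℝ φ x).le_opNorm _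
    calc |φ y - φ x| = ‖(φ y - φ x - fderiv ℝ φ x (y - x)) + fderiv ℝ φ x (y - x)‖ := by
          congr 1; ring
      _ ≤ ‖φ y - φ x - fderiv ℝ φ x (y - x)‖ + ‖fderiv ℝ φ x (y - x)‖ := norm_add_le _ _
      _ ≤ (ε / (K + 1)) * ‖y - x‖ + ‖fderiv ℝ φ x‖ * ‖y - x‖ := add_le_add h3 h4
      _ = ‖fderiv ℝ φ x‖ * ‖y - x‖ + (ε / (K + 1)) * ‖y - x‖ := by ring
  calc ‖h (φ y) - h (φ x)‖ ≤ K * |φ y - φ x| := h1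
    _ ≤ K * (‖fderiv ℝ φ x‖ * ‖y - x‖ + (ε / (K + 1)) * ‖y - x‖) := by
        exact mul_le_mul_of_nonneg_left h2 hKpos
    _ ≤ (K * ‖fderiv ℝ φ x‖ + ε) * ‖y - x‖ := by
        have hnn : (0:ℝ) ≤ ‖y - x‖ := norm_nonneg _
        have : (K:ℝ) * (ε / (K + 1)) ≤ ε := by
          rw [mul_div_assoc'] ; rw [div_le_iff₀ (by positivity)]; nlinarith
        nlinarith
  
end Helpers

lemma trunc_facts {n : ℕ} {Ω : Set (Fin n → ℝ)} {a : ℝ} (ha : 1 < a)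
    {φ : (Fin n → ℝ) → ℝ} {L : ℝ≥0} (hφL : LipschitzWith L φ)
    (hφsupp : HasCompactSupport φ) (hφΩ : tsupport φ ⊆ Ω)
    {b c t : ℝ} (hb : 1 < b) (hbc : b < c) (hca : c < a) (ht : 0 < t) :
    ∃ u : (Fin n → ℝ) → ℝ,
      u ∈ admissible (closure {x | x ∈ Ω ∧ a * t < |φ x|}) {x | x ∈ Ω ∧ t < |φ x|} ∧
      (∀ᵐ x, ‖fderiv ℝ u x‖ ≤ ((c - b) * t)⁻¹ * ‖fderiv ℝ φ x‖) ∧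
      (∀ x, ¬(b * t ≤ |φ x| ∧ |φ x| ≤ c * t) → fderiv ℝ u x = 0) := by
  set κ : ℝ := (c - b) * t with hκdef
  have hκ : 0 < κ := by
    have : 0 < c - b := by linarith
    positivity
  set h : ℝ → ℝ := fun y => max 0 (min 1 ((|y| - b * t) / κ)) with hhdef
  set u : (Fin n → ℝ) → ℝ := fun x => h (φ x) with hudef
  have hcont : Continuous fun x => |φ x| := hφL.continuous.abs
  -- h is Lipschitz
  have hh : LipschitzWith (Real.toNNReal κ⁻¹) h := by
    refine LipschitzWith.of_dist_le_mul fun y z => ?_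
    simp only [Real.dist_eq, hhdef]
    have e1 : |max 0 (min 1 ((|y| - b*t)/κ)) - max 0 (min 1 ((|z| - b*t)/κ))|
        ≤ |min 1 ((|y| - b*t)/κ) - min 1 ((|z| - b*t)/κ)| := by
      rw [max_comm 0 (min 1 ((|y| - b*t)/κ)), max_comm 0 (min 1 ((|z| - b*t)/κ))]
      exact abs_max_sub_max_le_abs _ _ _
    have e2 : |min 1 ((|y| - b*t)/κ) - min 1 ((|z| - b*t)/κ)|
        ≤ |(|y| - b*t)/κ - (|z| - b*t)/κ| := by
      have := abs_min_sub_min_le_max (1:ℝ) ((|y| - b*t)/κ) 1 ((|z| - b*t)/κ)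
      simpa using this
    have e3 : |(|y| - b*t)/κ - (|z| - b*t)/κ| = abs (|y| - |z|) / κ := by
      rw [div_sub_div_same, sub_sub_sub_cancel_right, abs_div, abs_of_pos hκ]
    have e4 : abs (|y| - |z|) ≤ |y - z| := abs_abs_sub_abs_le_abs_sub y z
    have e5 : (Real.toNNReal κ⁻¹ : ℝ) = κ⁻¹ := Real.coe_toNNReal _ (by positivity)
    calc |h y - h z| ≤ abs (|y| - |z|) / κ := by
          simp only [hhdef]; exact le_trans e1 (le_trans e2 (le_of_eq e3))
      _ ≤ |y - z| / κ := by gcongr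

      _ = (Real.toNNReal κ⁻¹ : ℝ) * |y - z| := by rw [e5, div_eq_inv_mul]
  have hbt : 0 < b * t := by positivity
  -- support facts
  have hsupp0 : ∀ x, u x ≠ 0 → b * t ≤ |φ x| := by
    intro x hx
    by_contra hcon
    push_neg at hcon
    apply hx
    simp only [hudef, hhdef]
    have : (|φ x| - b*t)/κ < 0 := by
      apply div_neg_of_neg_of_pos ?_ hκ
      linarith
    have hmin : min 1 ((|φ x| - b*t)/κ) ≤ (|φ x| - b*t)/κ := min_le_right _ _
    have : min 1 ((|φ x| - b*t)/κ) ≤ 0 := by linarith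
    exact max_eq_left this
  have htsupp : tsupport u ⊆ {x | b * t ≤ |φ x|} := by
    apply closure_minimal
    · intro x hx
      exact hsupp0 x hx
    · exact isClosed_le continuous_const hcont
  have hsuppφ : Function.support u ⊆ Function.support φ := by
    intro x hx
    have := hsupp0 x hx
    intro hcon
    rw [hcon] at this
    simp at this
    linarith
  have hu1 : ∀ x, c * t < |φ x| → u x = 1 := by
    intro x hx
    simp only [hudef, hhdef]
    have h1 : (1:ℝ) ≤ (|φ x| - b*t)/κ := by
      rw [le_div_iff₀ hκ]
      simp only [hκdef]
      nlinarith
    rw [min_eq_left h1]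
    exact max_eq_right zero_le_one
  refine ⟨u, ⟨⟨Real.toNNReal κ⁻¹ * L, hh.comp hφL⟩, ?_, ?_, ?_⟩, ?_, ?_⟩
  · -- compact support
    exact hφsupp.mono' (subset_trans hsuppφ subset_closure)
  · -- tsupport u ⊆ M_t
    intro x hx
    have h1 : b * t ≤ |φ x| := htsupp hx
    have h2 : t < |φ x| := by nlinarith
    have h3 : x ∈ Ω := by
      apply hφΩ
      apply subset_closure
      intro hcon
      rw [hcon] at h1
      simp at h1
      linarith
    exact ⟨h3, h2⟩
  · -- closure M_at ⊆ interior {1 ≤ u}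
    have step1 : closure {x | x ∈ Ω ∧ a * t < |φ x|} ⊆ {x | a * t ≤ |φ x|} := by
      apply closure_minimal
      · intro x hx
        exact le_of_lt hx.2
      · exact isClosed_le continuous_const hcont
    have step2 : {x : Fin n → ℝ | a * t ≤ |φ x|} ⊆ {x | c * t < |φ x|} := by
      intro x hx
      have : c * t < a * t := by nlinarith
      exact lt_of_lt_of_le this hx
    refine subset_trans step1 (subset_trans step2 ?_)
    apply interior_maximal
    · intro x hx
      exact le_of_eq (hu1 x hx).symm
    · exact isOpen_lt continuous_const hcont
  · -- a.e. gradient bound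
    filter_upwards [hφL.ae_differentiableAt (μ := volume)] with x hx
    have := norm_fderiv_comp_le hh hx
    calc ‖fderiv ℝ u x‖ ≤ (Real.toNNReal κ⁻¹ : ℝ) * ‖fderiv ℝ φ x‖ := this
      _ = κ⁻¹ * ‖fderiv ℝ φ x‖ := by
          rw [Real.coe_toNNReal _ (by positivity : (0:ℝ) ≤ κ⁻¹)]
  · -- locally constant outside annulus
    intro x hx
    push_neg at hx
    rcases lt_or_ge (|φ x|) (b * t) with hlt | hge
    · have hopen : IsOpen {y : Fin n → ℝ | |φ y| < b * t} := isOpen_lt hcont continuous_const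
      have hmem : x ∈ {y : Fin n → ℝ | |φ y| < b * t} := hlt
      have hev : u =ᶠ[nhds x] fun _ => (0:ℝ) := by
        filter_upwards [hopen.mem_nhds hmem] with y hy
        by_contra hcon
        have := hsupp0 y hcon
        have : (b*t : ℝ) < b*t := lt_of_le_of_lt this hy
        exact lt_irrefl _ this
      rw [hev.fderiv_eq, fderiv_fun_const]
      rfl
    · have hgt : c * t < |φ x| := hx hge
      have hopen : IsOpen {y : Fin n → ℝ | c * t < |φ y|} := isOpen_lt continuous_const hcont
      have hev : u =ᶠ[nhds x] fun _ => (1:ℝ) := by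
        filter_upwards [hopen.mem_nhds hgt] with y hy
        exact hu1 y hy
      rw [hev.fderiv_eq, fderiv_fun_const]
      rfl


section Main

variable {n : ℕ}

/-- Distribution-type integral of the gradient restricted to a set `A`. -/
noncomputable def gradInt (p q : ℝ) (φ : (Fin n → ℝ) → ℝ) (A : Set (Fin n → ℝ)) : ℝ≥0∞ :=
  ∫⁻ s in Ioi (0:ℝ), ENNReal.ofReal (s ^ (q - 1)) *
    (volume ({x | s < ‖fderiv ℝ φ x‖} ∩ A)) ^ (q / p)

lemma cap_bound {p q : ℝ} (hp : 1 < p) (hpq : p < q)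
    {Ω : Set (Fin n → ℝ)} {a : ℝ} (ha : 1 < a)
    {φ : (Fin n → ℝ) → ℝ} {L : ℝ≥0} (hφL : LipschitzWith L φ)
    (hφsupp : HasCompactSupport φ) (hφΩ : tsupport φ ⊆ Ω)
    {b c t : ℝ} (hb : 1 < b) (hbc : b < c) (hca : c < a) (ht : 0 < t) :
    ENNReal.ofReal (t ^ q) *
      (capacitance n p (ENNReal.ofReal q) (closure {x | x ∈ Ω ∧ a * t < |φ x|})
        {x | x ∈ Ω ∧ t < |φ x|}) ^ (q / p)
    ≤ ENNReal.ofReal ((c - b) ^ (-q)) *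
        (ENNReal.ofReal p * gradInt p q φ {x | b * t ≤ |φ x| ∧ |φ x| ≤ c * t}) := by
  obtain ⟨u, hu_adm, hgrad_ae, hgrad0⟩ := trunc_facts ha hφL hφsupp hφΩ hb hbc hca ht
  have hq1 : (1:ℝ) < q := lt_trans hp hpq
  have hq0 : (0:ℝ) < q := lt_trans one_pos hq1
  have hp0 : (0:ℝ) < p := lt_trans one_pos hp
  have hcb : (0:ℝ) < c - b := by linarith
  have hκpos : (0:ℝ) < (c - b) * t := by positivity
  set κ : ℝ := (c - b) * t with hκdef
  set M : Set (Fin n → ℝ) := {x | x ∈ Ω ∧ t < |φ x|} with hMdef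
  set A : Set (Fin n → ℝ) := {x | b * t ≤ |φ x| ∧ |φ x| ≤ c * t} with hAdef
  set Dj : ℝ → ℝ≥0∞ := fun s => volume ({x | s < ‖fderiv ℝ φ x‖} ∩ A) with hDjdef
  have hDjanti : Antitone Dj := by
    intro s1 s2 h12
    exact measure_mono (inter_subset_inter_left _ (fun x hx => lt_of_le_of_lt h12 hx))
  -- capacitance bounded by the Lorentz norm of the truncation
  have hcap : capacitance n p (ENNReal.ofReal q) (closure {x | x ∈ Ω ∧ a * t < |φ x|}) M
      ≤ lorentzNorm (volume.restrict M) p (ENNReal.ofReal q)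
          (fun x => ‖fderiv ℝ u x‖) ^ p :=
    iInf₂_le u hu_adm
  set X : ℝ≥0∞ := ENNReal.ofReal p * ∫⁻ s in Ioi (0:ℝ),
      ENNReal.ofReal (s ^ (q - 1)) *
        (distribFn (volume.restrict M) (fun x => ‖fderiv ℝ u x‖) s) ^ (q/p) with hXdef
  have hlor : lorentzNorm (volume.restrict M) p (ENNReal.ofReal q)
      (fun x => ‖fderiv ℝ u x‖) = X ^ (1/q) := by
    rw [lorentzNorm, if_neg ENNReal.ofReal_ne_top, ENNReal.toReal_ofReal hq0.le]
  have hcap2 : (capacitance n p (ENNReal.ofReal q)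
      (closure {x | x ∈ Ω ∧ a * t < |φ x|}) M) ^ (q/p) ≤ X := by
    have h1 : (capacitance n p (ENNReal.ofReal q)
        (closure {x | x ∈ Ω ∧ a * t < |φ x|}) M) ^ (q/p) ≤ ((X ^ (1/q)) ^ p) ^ (q/p) := by
      refine ENNReal.rpow_le_rpow ?_ (by positivity)
      rw [← hlor]
      exact hcap
    refine le_trans h1 (le_of_eq ?_)
    rw [← ENNReal.rpow_mul, ← ENNReal.rpow_mul,
      show 1/q * (p * (q/p)) = 1 by field_simp, ENNReal.rpow_one]
  -- pointwise bound of the distribution function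
  have hdist : ∀ s ∈ Ioi (0:ℝ),
      distribFn (volume.restrict M) (fun x => ‖fderiv ℝ u x‖) s ≤ Dj (κ * s) := by
    intro s hs
    have hs0 : (0:ℝ) < s := hs
    have hmeas_u : MeasurableSet {x : Fin n → ℝ | s < ‖fderiv ℝ u x‖} :=
      measurableSet_lt measurable_const (measurable_fderiv ℝ u).norm
    have hd1 : distribFn (volume.restrict M) (fun x => ‖fderiv ℝ u x‖) s
        = volume ({x | s < ‖fderiv ℝ u x‖} ∩ M) := by
      rw [distribFn]
      simp only [abs_norm]
      exact Measure.restrict_apply hmeas_u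
    rw [hd1]
    refine measure_mono_ae ?_
    filter_upwards [hgrad_ae] with x hx
    intro hxmem
    obtain ⟨hx1, _⟩ := hxmem
    have hx1' : s < ‖fderiv ℝ u x‖ := hx1
    have hxA : x ∈ A := by
      by_contra hcon
      have h0 := hgrad0 x (by simpa [hAdef] using hcon)
      rw [h0] at hx1'
      simp only [norm_zero] at hx1'
      linarith
    refine ⟨?_, hxA⟩
    have hlt : s < κ⁻¹ * ‖fderiv ℝ φ x‖ := lt_of_lt_of_le hx1' hx
    show κ * s < ‖fderiv ℝ φ x‖
    calc κ * s < κ * (κ⁻¹ * ‖fderiv ℝ φ x‖) := (mul_lt_mul_iff_right₀ hκpos).2 hlt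
      _ = ‖fderiv ℝ φ x‖ := by field_simp
  -- measurable integrand for change of variables
  have hqm1 : (0:ℝ) ≤ q - 1 := by linarith
  have hG : Measurable (fun σ : ℝ => ENNReal.ofReal (σ^(q-1)) * Dj σ ^ (q/p)) :=
    ((ENNReal.continuous_ofReal.comp (Real.continuous_rpow_const hqm1)).measurable).mul
      ((ENNReal.continuous_rpow_const.measurable).comp hDjanti.measurable)
  set Y : ℝ≥0∞ := ∫⁻ s in Ioi (0:ℝ), ENNReal.ofReal (s^(q-1)) * Dj (κ*s) ^ (q/p) with hYdef
  have hXY : X ≤ ENNReal.ofReal p * Y := by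
    refine mul_le_mul_right ?_ _
    refine setLIntegral_mono' measurableSet_Ioi fun s hs => ?_
    exact mul_le_mul_right (ENNReal.rpow_le_rpow (hdist s hs) (by positivity)) _
  set J : ℝ≥0∞ := gradInt p q φ A with hJdef
  have hpre : (fun s : ℝ => κ * s) ⁻¹' (Ioi 0) = Ioi (0:ℝ) := by
    ext s
    simp only [mem_preimage, mem_Ioi]
    constructor
    · intro hh
      by_contra hcon
      push_neg at hcon
      nlinarith
    · intro hh
      positivity
  have hcov : J = ENNReal.ofReal κ *
      ∫⁻ s in Ioi (0:ℝ), ENNReal.ofReal ((κ*s)^(q-1)) * Dj (κ*s) ^ (q/p) := by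
    have := lintegral_cov κ hκpos
      (fun σ => ENNReal.ofReal (σ^(q-1)) * Dj σ ^ (q/p)) (Ioi 0) measurableSet_Ioi
    rw [hpre] at this
    exact this
  have hJY : J = ENNReal.ofReal (κ ^ q) * Y := by
    rw [hcov]
    have hsplit : ∀ s ∈ Ioi (0:ℝ), ENNReal.ofReal ((κ*s)^(q-1)) * Dj (κ*s) ^ (q/p)
        = ENNReal.ofReal (κ^(q-1)) * (ENNReal.ofReal (s^(q-1)) * Dj (κ*s) ^ (q/p)) := by
      intro s hs
      have hs0 : (0:ℝ) < s := hs
      rw [Real.mul_rpow hκpos.le hs0.le, ENNReal.ofReal_mul (Real.rpow_nonneg hκpos.le _),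
        mul_assoc]
    rw [setLIntegral_congr_fun measurableSet_Ioi hsplit,
      lintegral_const_mul' _ _ ENNReal.ofReal_ne_top, ← mul_assoc,
      ← ENNReal.ofReal_mul hκpos.le]
    congr 2
    rw [← Real.rpow_one_add' hκpos.le (by linarith : (1:ℝ) + (q-1) ≠ 0)]
    norm_num
  have hYJ : Y = ENNReal.ofReal (κ ^ (-q)) * J := by
    rw [hJY, ← mul_assoc, ← ENNReal.ofReal_mul (Real.rpow_nonneg hκpos.le _),
      ← Real.rpow_add hκpos, neg_add_cancel, Real.rpow_zero, ENNReal.ofReal_one, one_mul]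
  calc ENNReal.ofReal (t ^ q) * (capacitance n p (ENNReal.ofReal q)
        (closure {x | x ∈ Ω ∧ a * t < |φ x|}) M) ^ (q / p)
      ≤ ENNReal.ofReal (t ^ q) * X := mul_le_mul_right hcap2 _
    _ ≤ ENNReal.ofReal (t ^ q) * (ENNReal.ofReal p * (ENNReal.ofReal (κ ^ (-q)) * J)) := by
        rw [← hYJ]
        exact mul_le_mul_right hXY _
    _ = (ENNReal.ofReal (t ^ q) * ENNReal.ofReal (κ ^ (-q))) * (ENNReal.ofReal p * J) := by
        ring
    _ = ENNReal.ofReal ((c - b) ^ (-q)) * (ENNReal.ofReal p * J) := by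
        congr 1
        rw [← ENNReal.ofReal_mul (Real.rpow_nonneg ht.le q)]
        congr 1
        have hκq : κ ^ (-q) = (c-b)^(-q) * t^(-q) := by
          rw [hκdef, Real.mul_rpow hcb.le ht.le]
        rw [hκq, mul_comm ((c-b)^(-q)) (t^(-q)), ← mul_assoc, ← Real.rpow_add ht,
          add_neg_cancel, Real.rpow_zero, one_mul]


lemma gradInt_tsum_le {p q : ℝ} (hp : 1 < p) (hpq : p < q)
    {Ω : Set (Fin n → ℝ)} {a : ℝ} (ha : 1 < a)
    {φ : (Fin n → ℝ) → ℝ} (hφc : Continuous φ) (hφΩ : tsupport φ ⊆ Ω)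
    {b c τ : ℝ} (hb : 1 < b) (hbc : b < c) (hca : c < a) (hτ : 0 < τ) :
    ∑' j : ℤ, gradInt p q φ {x | b * (a ^ j * τ) ≤ |φ x| ∧ |φ x| ≤ c * (a ^ j * τ)}
      ≤ gradInt p q φ Ω := by
  have ha0 : (0:ℝ) < a := lt_trans one_pos ha
  have hq1 : (1:ℝ) < q := lt_trans hp hpq
  have hq0 : (0:ℝ) < q := lt_trans one_pos hq1
  have hp0 : (0:ℝ) < p := lt_trans one_pos hp
  have hqp1 : (1:ℝ) ≤ q / p := (one_le_div hp0).2 hpq.le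
  set A : ℤ → Set (Fin n → ℝ) :=
    fun j => {x | b * (a ^ j * τ) ≤ |φ x| ∧ |φ x| ≤ c * (a ^ j * τ)} with hA
  have htj : ∀ j : ℤ, (0:ℝ) < a ^ j * τ := fun j => mul_pos (zpow_pos ha0 j) hτ
  have hAmeas : ∀ j, MeasurableSet (A j) := by
    intro j
    exact ((isClosed_le continuous_const hφc.abs).measurableSet).inter
      ((isClosed_le hφc.abs continuous_const).measurableSet)
  have hAsub : ∀ j, A j ⊆ Ω := by
    intro j x hx
    have h1 : 0 < b * (a ^ j * τ) := by positivity
    have h2 : φ x ≠ 0 := by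
      intro hcon
      have hx1 := hx.1
      rw [hcon] at hx1
      simp only [abs_zero] at hx1
      linarith
    exact hφΩ (subset_closure h2)
  have hAdisj : Pairwise (Function.onFun Disjoint A) := by
    intro i j hij
    wlog hlt : i < j generalizing i j
    · exact (this hij.symm (hij.lt_or_gt.resolve_left hlt)).symm
    refine Set.disjoint_left.2 fun x hxi hxj => ?_
    have key : c * (a ^ i * τ) < b * (a ^ j * τ) := by
      have h1 : (a:ℝ) ^ (i+1) ≤ a ^ j := zpow_le_zpow_right₀ ha.le (by omega)
      have h2 : (a:ℝ) ^ (i+1) = a ^ i * a := zpow_add_one₀ ha0.ne' i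
      have h3 : c * a ^ i < b * (a ^ i * a) := by
        have hpow : (0:ℝ) < a ^ i := zpow_pos ha0 i
        have : c < b * a := by nlinarith
        calc c * a ^ i < (b * a) * a ^ i := by nlinarith
          _ = b * (a ^ i * a) := by ring
      have hpowj : b * (a^i * a) ≤ b * a ^ j := by
        rw [← h2] ; nlinarith [zpow_pos ha0 (i+1)]
      calc c * (a ^ i * τ) = (c * a ^ i) * τ := by ring
        _ < (b * (a ^ i * a)) * τ := by nlinarith
        _ ≤ (b * a ^ j) * τ := by nlinarith
        _ = b * (a ^ j * τ) := by ring
    have hx2 := hxi.2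
    have hx1 := hxj.1
    linarith
  have hqm1 : (0:ℝ) ≤ q - 1 := by linarith
  have hsetmeas : ∀ s : ℝ, MeasurableSet {x : Fin n → ℝ | s < ‖fderiv ℝ φ x‖} := fun s =>
    measurableSet_lt measurable_const (measurable_fderiv ℝ φ).norm
  have hmeasj : ∀ j : ℤ, Measurable fun s : ℝ =>
      ENNReal.ofReal (s ^ (q-1)) * (volume ({x | s < ‖fderiv ℝ φ x‖} ∩ A j)) ^ (q/p) := by
    intro j
    have hanti : Antitone fun s : ℝ => volume ({x | s < ‖fderiv ℝ φ x‖} ∩ A j) := by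
      intro s1 s2 h12
      exact measure_mono (inter_subset_inter_left _ (fun x hx => lt_of_le_of_lt h12 hx))
    exact ((ENNReal.continuous_ofReal.comp
        (Real.continuous_rpow_const hqm1)).measurable).mul
      ((ENNReal.continuous_rpow_const.measurable).comp hanti.measurable)
  calc ∑' j : ℤ, gradInt p q φ (A j)
      = ∫⁻ s in Ioi (0:ℝ), ∑' j : ℤ, ENNReal.ofReal (s^(q-1)) *
          (volume ({x | s < ‖fderiv ℝ φ x‖} ∩ A j))^(q/p) :=
        (lintegral_tsum fun j => (hmeasj j).aemeasurable).symm
    _ ≤ ∫⁻ s in Ioi (0:ℝ), ENNReal.ofReal (s^(q-1)) *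
          (volume ({x | s < ‖fderiv ℝ φ x‖} ∩ Ω))^(q/p) := by
        refine setLIntegral_mono' measurableSet_Ioi fun s _ => ?_
        rw [ENNReal.tsum_mul_left]
        refine mul_le_mul_right ?_ _
        calc ∑' j : ℤ, (volume ({x | s < ‖fderiv ℝ φ x‖} ∩ A j))^(q/p)
            ≤ (∑' j : ℤ, volume ({x | s < ‖fderiv ℝ φ x‖} ∩ A j))^(q/p) :=
              tsum_rpow_le _ hqp1
          _ ≤ (volume ({x | s < ‖fderiv ℝ φ x‖} ∩ Ω))^(q/p) := by
              refine ENNReal.rpow_le_rpow ?_ (by positivity)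
              rw [← measure_iUnion
                (fun i j hij => (hAdisj hij).mono inter_subset_right inter_subset_right)
                (fun j => (hsetmeas s).inter (hAmeas j))]
              exact measure_mono (iUnion_subset fun j =>
                inter_subset_inter_right _ (hAsub j))
    _ = gradInt p q φ Ω := rfl

lemma lorentz_eq {p q : ℝ} (hp : 0 < p) (hq : 1 < q) (Ω : Set (Fin n → ℝ))
    (φ : (Fin n → ℝ) → ℝ) :
    lorentzNorm (volume.restrict Ω) p (ENNReal.ofReal q) (fun x => ‖fderiv ℝ φ x‖)
      = (ENNReal.ofReal p * gradInt p q φ Ω) ^ (1/q) := by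
  have hq0 : (0:ℝ) < q := lt_trans one_pos hq
  rw [lorentzNorm, if_neg ENNReal.ofReal_ne_top, ENNReal.toReal_ofReal hq0.le]
  congr 1
  rw [gradInt]
  congr 1
  refine lintegral_congr fun s => ?_
  have hds : distribFn (volume.restrict Ω) (fun x => ‖fderiv ℝ φ x‖) s
      = volume ({x | s < ‖fderiv ℝ φ x‖} ∩ Ω) := by
    rw [distribFn]
    have hms : MeasurableSet {x : Fin n → ℝ | s < ‖fderiv ℝ φ x‖} :=
      measurableSet_lt measurable_const (measurable_fderiv ℝ φ).norm
    simp only [abs_norm]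
    exact Measure.restrict_apply hms
  rw [hds]

lemma lorentz_sq_eq {p q : ℝ} (hp : 0 < p) (hq : 1 < q) (Ω : Set (Fin n → ℝ))
    (φ : (Fin n → ℝ) → ℝ) :
    (lorentzNorm (volume.restrict Ω) p (ENNReal.ofReal q)
        (fun x => ‖fderiv ℝ φ x‖)) ^ q = ENNReal.ofReal p * gradInt p q φ Ω := by
  have hq0 : (0:ℝ) < q := lt_trans one_pos hq
  rw [lorentz_eq hp hq Ω φ, ← ENNReal.rpow_mul, one_div, inv_mul_cancel₀ hq0.ne',
    ENNReal.rpow_one]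

lemma gradInt_lt_top {p q : ℝ} (hp : 1 < p) (hpq : p < q)
    {Ω : Set (Fin n → ℝ)} {φ : (Fin n → ℝ) → ℝ} {L : ℝ≥0} (hφL : LipschitzWith L φ)
    (hφsupp : HasCompactSupport φ) :
    ENNReal.ofReal p * gradInt p q φ Ω < ⊤ := by
  have hq1 : (1:ℝ) < q := lt_trans hp hpq
  have hq0 : (0:ℝ) < q := lt_trans one_pos hq1
  have hqp : (0:ℝ) < q / p := by positivity
  set C : ℝ := max 1 (L:ℝ) with hC
  have hC1 : (1:ℝ) ≤ C := le_max_left _ _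
  have hLC : (L:ℝ) ≤ C := le_max_right _ _
  set V : ℝ≥0∞ := volume (tsupport φ) with hV
  have hVtop : V ≠ ⊤ := hφsupp.measure_lt_top.ne
  set B : ℝ≥0∞ := ENNReal.ofReal (C ^ (q-1)) * V ^ (q/p) with hB
  have hBtop : B ≠ ⊤ :=
    ENNReal.mul_ne_top ENNReal.ofReal_ne_top (ENNReal.rpow_ne_top_of_nonneg hqp.le hVtop)
  have hbound : ∀ s ∈ Ioi (0:ℝ),
      ENNReal.ofReal (s ^ (q - 1)) * (volume ({x | s < ‖fderiv ℝ φ x‖} ∩ Ω)) ^ (q / p)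
        ≤ (Ioc (0:ℝ) C).indicator (fun _ => B) s := by
    intro s hs
    have hs0 : (0:ℝ) < s := hs
    rcases le_or_gt s C with hsC | hsC
    · rw [Set.indicator_of_mem (show s ∈ Ioc (0:ℝ) C from ⟨hs0, hsC⟩) (fun _ => B)]
      refine mul_le_mul ?_ ?_ zero_le zero_le
      · exact ENNReal.ofReal_le_ofReal
          (Real.rpow_le_rpow hs0.le hsC (by linarith))
      · refine ENNReal.rpow_le_rpow ?_ hqp.le
        refine le_trans (measure_mono inter_subset_left) (measure_mono ?_)
        intro x hx
        have : fderiv ℝ φ x ≠ 0 := by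
          intro hcon
          simp only [mem_setOf_eq, hcon, norm_zero] at hx
          linarith
        exact support_fderiv_subset ℝ (by simpa using this)
    · rw [Set.indicator_of_notMem
        (show s ∉ Ioc (0:ℝ) C from fun hmem => absurd hmem.2 (not_le.2 hsC)) (fun _ => B)]
      have hempty : {x : Fin n → ℝ | s < ‖fderiv ℝ φ x‖} = ∅ := by
        ext x
        simp only [mem_setOf_eq, mem_empty_iff_false, iff_false, not_lt]
        calc ‖fderiv ℝ φ x‖ ≤ L := norm_fderiv_le_of_lipschitz ℝ hφL
          _ ≤ C := hLC
          _ ≤ s := hsC.le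
      rw [hempty, empty_inter, measure_empty, ENNReal.zero_rpow_of_pos hqp, mul_zero]
  have hkey : gradInt p q φ Ω ≤ B * volume (Ioc (0:ℝ) C) := by
    calc gradInt p q φ Ω
        ≤ ∫⁻ s in Ioi (0:ℝ), (Ioc (0:ℝ) C).indicator (fun _ => B) s :=
          setLIntegral_mono' measurableSet_Ioi hbound
      _ ≤ ∫⁻ s, (Ioc (0:ℝ) C).indicator (fun _ => B) s := setLIntegral_le_lintegral _ _
      _ = B * volume (Ioc (0:ℝ) C) := by
          rw [lintegral_indicator measurableSet_Ioc, setLIntegral_const]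
  have hfin : B * volume (Ioc (0:ℝ) C) < ⊤ := by
    refine ENNReal.mul_lt_top hBtop.lt_top ?_
    rw [Real.volume_Ioc]
    exact ENNReal.ofReal_lt_top
  exact ENNReal.mul_lt_top ENNReal.ofReal_lt_top (lt_of_le_of_lt hkey hfin)

lemma log_integral_Ico {a : ℝ} (ha : 1 < a) :
    ∫⁻ τ in Ico (1:ℝ) a, ENNReal.ofReal τ⁻¹ = ENNReal.ofReal (Real.log a) := by
  have h0a : (0:ℝ) < a := lt_trans one_pos ha
  have hrestr : (volume : Measure ℝ).restrict (Ico (1:ℝ) a) = volume.restrict (Ioc 1 a) :=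
    Measure.restrict_congr_set Ico_ae_eq_Ioc
  have hint : IntegrableOn (fun τ : ℝ => τ⁻¹) (Ioc 1 a) := by
    refine (ContinuousOn.integrableOn_Icc ?_).mono_set Ioc_subset_Icc_self
    refine continuousOn_inv₀.mono fun x hx => ?_
    intro hx0
    rw [mem_singleton_iff] at hx0
    rw [hx0] at hx
    exact absurd hx.1 (by norm_num)
  have hnn : 0 ≤ᵐ[volume.restrict (Ioc (1:ℝ) a)] fun τ : ℝ => τ⁻¹ := by
    filter_upwards [ae_restrict_mem measurableSet_Ioc] with τ hτ
    have : (0:ℝ) < τ := lt_trans one_pos hτ.1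
    positivity
  rw [hrestr, ← ofReal_integral_eq_lintegral_ofReal hint hnn]
  congr 1
  rw [← intervalIntegral.integral_of_le ha.le, integral_inv_of_pos one_pos h0a, div_one]

end Main

/-- Conductor inequality with a convex function `Φ`, case `1 < p < q < ∞`:
`∫_0^∞ Φ(t^q cap_{p,q}(closure M_{at}, M_t)^{q/p}) dt/t ≤ Φ((a−1)^{−q} ‖∇φ‖_{L^{p,q}}^q) · log a`. -/
theorem conductor_inequality_Phi_p_lt_q {n : ℕ} (p q : ℝ)
    (hp : 1 < p) (hpq : p < q)
    {Ω : Set (Fin n → ℝ)} (hΩ : IsOpen Ω)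
    (a : ℝ) (ha : 1 < a)
    (Φ : ℝ → ℝ) (hΦmono : MonotoneOn Φ (Ici 0)) (hΦconv : ConvexOn ℝ (Ici 0) Φ)
    (hΦ0 : Φ 0 = 0) (hΦnonneg : ∀ x ∈ Ici (0 : ℝ), 0 ≤ Φ x)
    (φ : (Fin n → ℝ) → ℝ) (hφ : ∃ L, LipschitzWith L φ)
    (hφsupp : HasCompactSupport φ) (hφΩ : tsupport φ ⊆ Ω) :
    (∫⁻ t in Ioi (0 : ℝ),
        ENNReal.ofReal
          (Φ (t ^ q *
            (capacitance n p (ENNReal.ofReal q)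
              (closure {x | x ∈ Ω ∧ a * t < |φ x|})
              {x | x ∈ Ω ∧ t < |φ x|}).toReal ^ (q / p)) / t)) ≤
      ENNReal.ofReal
        (Φ ((a - 1) ^ (-q) * (lorentzNorm (volume.restrict Ω) p (ENNReal.ofReal q)
              (fun x => ‖fderiv ℝ φ x‖)).toReal ^ q) * Real.log a) := by
  obtain ⟨L, hφL⟩ := hφ
  have hq1 : (1:ℝ) < q := lt_trans hp hpq
  have hq0 : (0:ℝ) < q := lt_trans one_pos hq1
  have hp0 : (0:ℝ) < p := lt_trans one_pos hp
  have ha0 : (0:ℝ) < a := lt_trans one_pos ha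
  have ha1 : (0:ℝ) < a - 1 := by linarith
  set N : ℝ≥0∞ := lorentzNorm (volume.restrict Ω) p (ENNReal.ofReal q)
    (fun x => ‖fderiv ℝ φ x‖) with hNdef
  set T : ℝ := N.toReal with hTdef
  set f : ℝ → ℝ≥0∞ := fun t => ENNReal.ofReal
    (Φ (t ^ q * (capacitance n p (ENNReal.ofReal q)
        (closure {x | x ∈ Ω ∧ a * t < |φ x|})
        {x | x ∈ Ω ∧ t < |φ x|}).toReal ^ (q / p)) / t) with hfdef
  have hNq : N ^ q = ENNReal.ofReal p * gradInt p q φ Ω := lorentz_sq_eq hp0 hq1 Ω φ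
  have hEfin : ENNReal.ofReal p * gradInt p q φ Ω ≠ ⊤ :=
    (gradInt_lt_top hp hpq hφL hφsupp).ne
  -- the key estimate, for every admissible ε
  have key : ∀ ε : ℝ, ε ∈ Ioo (0:ℝ) ((a-1)/2) →
      (∫⁻ t in Ioi (0:ℝ), f t)
        ≤ ENNReal.ofReal (Φ ((a - 1 - 2*ε) ^ (-q) * T ^ q) * Real.log a) := by
    intro ε hε
    obtain ⟨hε0, hε2⟩ := hε
    set b : ℝ := 1 + ε with hbdef
    set c : ℝ := a - ε with hcdef
    have hb : 1 < b := by simp [hbdef]; linarith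
    have hbc : b < c := by simp [hbdef, hcdef]; linarith
    have hca : c < a := by simp [hcdef]; linarith
    have hcb_eq : c - b = a - 1 - 2*ε := by simp [hbdef, hcdef]; ring
    have hcb : (0:ℝ) < c - b := by rw [hcb_eq]; linarith
    set Etot : ℝ≥0∞ := ENNReal.ofReal ((c - b) ^ (-q)) *
      (ENNReal.ofReal p * gradInt p q φ Ω) with hEtotdef
    have hEtop : Etot ≠ ⊤ := ENNReal.mul_ne_top ENNReal.ofReal_ne_top hEfin
    have hEreal : Etot.toReal = (a - 1 - 2*ε) ^ (-q) * T ^ q := by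
      rw [hEtotdef, ENNReal.toReal_mul, ENNReal.toReal_ofReal (Real.rpow_nonneg hcb.le _),
        ← hNq, ← ENNReal.toReal_rpow, hcb_eq]
    have hEnn : (0:ℝ) ≤ Etot.toReal := ENNReal.toReal_nonneg
    calc (∫⁻ t in Ioi (0:ℝ), f t)
        = ∑' j : ℤ, ENNReal.ofReal (a ^ j) * ∫⁻ τ in Ico (1:ℝ) a, f (a ^ j * τ) :=
          lintegral_Ioi_eq_tsum_Ico a ha f
      _ ≤ ∑' j : ℤ, ∫⁻ τ in Ico (1:ℝ) a, ENNReal.ofReal (a ^ j) * f (a ^ j * τ) :=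
          ENNReal.tsum_le_tsum fun j => lintegral_const_mul_le _ _
      _ ≤ ∫⁻ τ in Ico (1:ℝ) a, ∑' j : ℤ, ENNReal.ofReal (a ^ j) * f (a ^ j * τ) :=
          tsum_lintegral_le' _ _
      _ ≤ ∫⁻ τ in Ico (1:ℝ) a, ENNReal.ofReal (Φ (Etot.toReal)) * ENNReal.ofReal τ⁻¹ := by
          refine setLIntegral_mono' measurableSet_Ico fun τ hτ => ?_
          have hτ1 : (1:ℝ) ≤ τ := hτ.1
          have hτ0 : (0:ℝ) < τ := lt_of_lt_of_le one_pos hτ1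
          set capt : ℝ → ℝ≥0∞ := fun t => capacitance n p (ENNReal.ofReal q)
            (closure {x | x ∈ Ω ∧ a * t < |φ x|}) {x | x ∈ Ω ∧ t < |φ x|} with hcaptdef
          have htj : ∀ j : ℤ, (0:ℝ) < a ^ j * τ := fun j => mul_pos (zpow_pos ha0 j) hτ0
          set Gj : ℤ → ℝ≥0∞ := fun j => ENNReal.ofReal ((a ^ j * τ) ^ q) *
            (capt (a ^ j * τ)) ^ (q/p) with hGjdef
          have hGle : ∀ j : ℤ, Gj j ≤ ENNReal.ofReal ((c - b) ^ (-q)) *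
              (ENNReal.ofReal p * gradInt p q φ
                {x | b * (a ^ j * τ) ≤ |φ x| ∧ |φ x| ≤ c * (a ^ j * τ)}) :=
            fun j => cap_bound hp hpq ha hφL hφsupp hφΩ hb hbc hca (htj j)
          have hGsum : ∀ s : Finset ℤ, ∑ j ∈ s, Gj j ≤ Etot := by
            intro s
            calc ∑ j ∈ s, Gj j
                ≤ ∑ j ∈ s, ENNReal.ofReal ((c - b) ^ (-q)) *
                    (ENNReal.ofReal p * gradInt p q φ
                      {x | b * (a ^ j * τ) ≤ |φ x| ∧ |φ x| ≤ c * (a ^ j * τ)}) :=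
                  Finset.sum_le_sum fun j _ => hGle j
              _ ≤ ∑' j : ℤ, ENNReal.ofReal ((c - b) ^ (-q)) *
                    (ENNReal.ofReal p * gradInt p q φ
                      {x | b * (a ^ j * τ) ≤ |φ x| ∧ |φ x| ≤ c * (a ^ j * τ)}) :=
                  ENNReal.sum_le_tsum s
              _ = ENNReal.ofReal ((c - b) ^ (-q)) * (ENNReal.ofReal p *
                    ∑' j : ℤ, gradInt p q φ
                      {x | b * (a ^ j * τ) ≤ |φ x| ∧ |φ x| ≤ c * (a ^ j * τ)}) := by
                  rw [ENNReal.tsum_mul_left, ENNReal.tsum_mul_left]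
              _ ≤ Etot := by
                  rw [hEtotdef]
                  exact mul_le_mul_right (mul_le_mul_right
                    (gradInt_tsum_le hp hpq ha hφL.continuous hφΩ hb hbc hca hτ0) _) _
          have hGfin : ∀ j : ℤ, Gj j ≠ ⊤ := by
            intro j
            have := hGsum {j}
            rw [Finset.sum_singleton] at this
            exact (lt_of_le_of_lt this hEtop.lt_top).ne
          have hcapfin : ∀ j : ℤ, capt (a ^ j * τ) ≠ ⊤ := by
            intro j hcon
            apply hGfin j
            rw [hGjdef]
            simp only
            rw [hcon, ENNReal.top_rpow_of_pos (by positivity), ENNReal.mul_top]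
            exact (ENNReal.ofReal_pos.2 (Real.rpow_pos_of_pos (htj j) q)).ne'
          set gj : ℤ → ℝ := fun j => (a ^ j * τ) ^ q * (capt (a ^ j * τ)).toReal ^ (q/p)
            with hgjdef
          have hgj_nonneg : ∀ j, 0 ≤ gj j := fun j =>
            mul_nonneg (Real.rpow_nonneg (htj j).le _)
              (Real.rpow_nonneg ENNReal.toReal_nonneg _)
          have hgj_eq : ∀ j, gj j = (Gj j).toReal := by
            intro j
            rw [hGjdef, hgjdef]
            simp only
            rw [ENNReal.toReal_mul, ENNReal.toReal_ofReal (Real.rpow_nonneg (htj j).le _),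
              ENNReal.toReal_rpow]
          have hsum_le : ∀ s : Finset ℤ, ∑ j ∈ s, gj j ≤ Etot.toReal := by
            intro s
            have h1 : ∑ j ∈ s, gj j = (∑ j ∈ s, Gj j).toReal := by
              rw [ENNReal.toReal_sum fun j _ => hGfin j]
              exact Finset.sum_congr rfl fun j _ => hgj_eq j
            rw [h1]
            exact ENNReal.toReal_mono hEtop (hGsum s)
          -- now the pointwise sum estimate
          have hterm : ∀ j : ℤ, ENNReal.ofReal (a ^ j) * f (a ^ j * τ)
              = ENNReal.ofReal (Φ (gj j)) * ENNReal.ofReal τ⁻¹ := by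
            intro j
            have hpowj : (0:ℝ) < a ^ j := zpow_pos ha0 j
            rw [hfdef]
            simp only
            rw [← ENNReal.ofReal_mul hpowj.le]
            have harg : a ^ (j:ℤ) * (Φ (gj j) / (a ^ (j:ℤ) * τ)) = Φ (gj j) * τ⁻¹ := by
              field_simp
            have : a ^ (j:ℤ) * (Φ ((a ^ (j:ℤ) * τ) ^ q * (capt (a ^ (j:ℤ) * τ)).toReal ^ (q / p)) /
                (a ^ (j:ℤ) * τ)) = Φ (gj j) * τ⁻¹ := harg
            rw [this, ENNReal.ofReal_mul (hΦnonneg _ (mem_Ici.2 (hgj_nonneg j)))]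
          calc ∑' j : ℤ, ENNReal.ofReal (a ^ j) * f (a ^ j * τ)
              = (∑' j : ℤ, ENNReal.ofReal (Φ (gj j))) * ENNReal.ofReal τ⁻¹ := by
                rw [← ENNReal.tsum_mul_right]
                exact tsum_congr hterm
            _ ≤ ENNReal.ofReal (Φ (Etot.toReal)) * ENNReal.ofReal τ⁻¹ := by
                refine mul_le_mul_left ?_ _
                rw [ENNReal.tsum_eq_iSup_sum]
                refine iSup_le fun s => ?_
                rw [← ENNReal.ofReal_sum_of_nonneg
                  fun j _ => hΦnonneg _ (mem_Ici.2 (hgj_nonneg j))]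
                refine ENNReal.ofReal_le_ofReal ?_
                calc ∑ j ∈ s, Φ (gj j) ≤ Φ (∑ j ∈ s, gj j) :=
                      conv_superadd_sum hΦconv hΦ0 s gj hgj_nonneg
                  _ ≤ Φ (Etot.toReal) :=
                      hΦmono (mem_Ici.2 (Finset.sum_nonneg fun j _ => hgj_nonneg j))
                        (mem_Ici.2 hEnn) (hsum_le s)
      _ = ENNReal.ofReal (Φ (Etot.toReal)) * ENNReal.ofReal (Real.log a) := by
          rw [lintegral_const_mul' _ _ ENNReal.ofReal_ne_top, log_integral_Ico ha]
      _ = ENNReal.ofReal (Φ ((a - 1 - 2*ε) ^ (-q) * T ^ q) * Real.log a) := by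
          rw [← ENNReal.ofReal_mul (hΦnonneg _ (mem_Ici.2 hEnn)), hEreal]
  -- pass to the limit ε → 0⁺
  rcases eq_or_ne (T ^ q) 0 with hT0 | hT0
  · have hε : ((a-1)/4 : ℝ) ∈ Ioo (0:ℝ) ((a-1)/2) := by constructor <;> [linarith; linarith]
    refine le_trans (key _ hε) (le_of_eq ?_)
    rw [hT0, mul_zero, mul_zero]
  · have hTq : (0:ℝ) < T ^ q := lt_of_le_of_ne (Real.rpow_nonneg ENNReal.toReal_nonneg q)
      (Ne.symm hT0)
    have hx0 : (0:ℝ) < (a-1) ^ (-q) * T ^ q :=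
      mul_pos (Real.rpow_pos_of_pos ha1 _) hTq
    have hΦcont : ContinuousAt Φ ((a-1) ^ (-q) * T ^ q) := by
      have h1 : ContinuousOn Φ (interior (Ici (0:ℝ))) := hΦconv.continuousOn_interior
      rw [interior_Ici] at h1
      exact (h1 _ hx0).continuousAt (isOpen_Ioi.mem_nhds hx0)
    have hlim : Filter.Tendsto
        (fun ε : ℝ => ENNReal.ofReal (Φ ((a - 1 - 2*ε) ^ (-q) * T ^ q) * Real.log a))
        (nhdsWithin 0 (Ioi 0))
        (nhds (ENNReal.ofReal (Φ ((a-1) ^ (-q) * T ^ q) * Real.log a))) := by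
      refine (ENNReal.continuous_ofReal.continuousAt).tendsto.comp ?_
      refine Filter.Tendsto.mul_const _ ?_
      refine hΦcont.tendsto.comp ?_
      refine Filter.Tendsto.mul_const _ ?_
      have t1 : Filter.Tendsto (fun ε : ℝ => a - 1 - 2*ε) (nhdsWithin 0 (Ioi 0))
          (nhds (a - 1)) := by
        have : Filter.Tendsto (fun ε : ℝ => a - 1 - 2*ε) (nhds 0) (nhds (a - 1 - 2*0)) := by
          exact (continuous_const.sub (continuous_const.mul continuous_id)).tendsto 0
        rw [mul_zero, sub_zero] at this
        exact this.mono_left nhdsWithin_le_nhds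
      exact t1.rpow_const (Or.inl ha1.ne')
    refine ge_of_tendsto hlim ?_
    filter_upwards [Ioo_mem_nhdsGT_of_mem
      (show (0:ℝ) ∈ Ico (0:ℝ) ((a-1)/2) from ⟨le_rfl, by linarith⟩)] with ε hε
    exact key ε hε
end

section
/- Let Ω ⊂ ℝⁿ be open, 1 < p < q < ∞, a > 1. Then there exists a constant c(a,p,q) such that for all compactly supported Lipschitz f on Ω, with M_t = {|f| > t}: ∫_0^∞ cap_{p,q}(closure(M_{at}), M_t)^{q/p} d(t^q) ≤ c(a,p,q) ‖∇f‖_{L^{p,q}(Ω, mₙ; ℝⁿ)}^q. -/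
open MeasureTheory Set
open scoped ENNReal

lemma aux_phi_bound : ∃ C : ℝ, 1 ≤ C ∧ ∀ x : ℝ, |deriv Real.smoothTransition x| ≤ C := by
  have hcont : Continuous (deriv Real.smoothTransition) :=
    (Real.smoothTransition.contDiff (n := 2)).continuous_deriv (by norm_num)
  obtain ⟨C, hC⟩ := (isCompact_Icc (a := (0:ℝ)) (b := 1)).exists_bound_of_continuousOn
    hcont.continuousOn
  refine ⟨max C 1, le_max_right _ _, fun x => ?_⟩
  rcases le_or_gt x 0 with hx | hx
  · rcases eq_or_lt_of_le hx with rfl | hx'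
    · simpa [Real.norm_eq_abs] using le_trans (hC 0 (by simp)) (le_max_left _ _)
    · have : deriv Real.smoothTransition x = 0 := by
        have h0 : Real.smoothTransition =ᶠ[nhds x] fun _ => 0 := by
          filter_upwards [Iio_mem_nhds hx'] with y hy
          exact Real.smoothTransition.zero_of_nonpos (le_of_lt hy)
        rw [h0.deriv_eq, deriv_const]
      simp [this, le_trans zero_le_one (le_max_right _ _)]
  · rcases le_or_gt x 1 with hx1 | hx1
    · exact le_trans (hC x ⟨hx.le, hx1⟩) (le_max_left _ _)
    · have : deriv Real.smoothTransition x = 0 := by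
        have h0 : Real.smoothTransition =ᶠ[nhds x] fun _ => 1 := by
          filter_upwards [Ioi_mem_nhds hx1] with y hy
          exact Real.smoothTransition.one_of_one_le (le_of_lt hy)
        rw [h0.deriv_eq, deriv_const]
      simp [this, le_trans zero_le_one (le_max_right _ _)]

lemma aux_psi (b c t C₀ : ℝ) (hb : 0 < b) (hbc : b < c) (ht : 0 < t)
    (hC₀ : 1 ≤ C₀) (hder : ∀ x : ℝ, |deriv Real.smoothTransition x| ≤ C₀) :
    ∃ ψ : ℝ → ℝ, Differentiable ℝ ψ ∧
      (∀ s : ℝ, |s| ≤ b * t → ψ s = 0) ∧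
      (∀ s : ℝ, c * t ≤ |s| → ψ s = 1) ∧
      (∀ s : ℝ, |deriv ψ s| ≤ 2 * C₀ / ((c - b) * t)) := by
  set κ := (c - b) * t with hκdef
  have hκ : 0 < κ := mul_pos (sub_pos.2 hbc) ht
  set φ := Real.smoothTransition with hφdef
  have hφd : Differentiable ℝ φ := (Real.smoothTransition.contDiff (n := 1)).differentiable (by norm_num)
  set ψ : ℝ → ℝ := fun s => φ ((s - b * t) / κ) + φ ((-s - b * t) / κ) with hψdef
  have hhas : ∀ s : ℝ, HasDerivAt ψ
      (deriv φ ((s - b * t) / κ) * (1 / κ) + deriv φ ((-s - b * t) / κ) * (-1 / κ)) s := by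
    intro s
    have i1 : HasDerivAt (fun s : ℝ => (s - b * t) / κ) (1 / κ) s := by
      simpa using ((hasDerivAt_id s).sub_const (b * t)).div_const κ
    have i2 : HasDerivAt (fun s : ℝ => (-s - b * t) / κ) (-1 / κ) s := by
      simpa using (((hasDerivAt_id s).neg).sub_const (b * t)).div_const κ
    exact (((hφd _).hasDerivAt.comp s i1).add ((hφd _).hasDerivAt.comp s i2))
  refine ⟨ψ, fun s => (hhas s).differentiableAt, ?_, ?_, ?_⟩
  · intro s hs
    have h1 : (s - b * t) / κ ≤ 0 :=
      div_nonpos_of_nonpos_of_nonneg (by linarith [le_abs_self s]) hκ.le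
    have h2 : (-s - b * t) / κ ≤ 0 :=
      div_nonpos_of_nonpos_of_nonneg (by linarith [neg_abs_le s]) hκ.le
    simp [ψ, φ, Real.smoothTransition.zero_of_nonpos h1,
      Real.smoothTransition.zero_of_nonpos h2]
  · intro s hs
    have hbt : 0 < b * t := mul_pos hb ht
    rcases le_or_gt (c * t) s with hcs | hcs
    · have ha1 : (1:ℝ) ≤ (s - b * t) / κ := by
        rw [le_div_iff₀ hκ]; simp only [hκdef]; nlinarith
      have ha2 : (-s - b * t) / κ ≤ 0 :=
        div_nonpos_of_nonpos_of_nonneg (by nlinarith) hκ.le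
      simp [ψ, φ, Real.smoothTransition.one_of_one_le ha1,
        Real.smoothTransition.zero_of_nonpos ha2]
    · have hs' : c * t ≤ -s := by
        rcases abs_cases s with ⟨he, _⟩ | ⟨he, _⟩
        · exfalso; rw [he] at hs; linarith
        · rw [he] at hs; linarith
      have ha1 : (s - b * t) / κ ≤ 0 :=
        div_nonpos_of_nonpos_of_nonneg (by nlinarith) hκ.le
      have ha2 : (1:ℝ) ≤ (-s - b * t) / κ := by
        rw [le_div_iff₀ hκ]; simp only [hκdef]; nlinarith
      simp [ψ, φ, Real.smoothTransition.one_of_one_le ha2,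
        Real.smoothTransition.zero_of_nonpos ha1]
  · intro s
    rw [(hhas s).deriv]
    have b1 := hder ((s - b * t) / κ)
    have b2 := hder ((-s - b * t) / κ)
    have hC0 : (0:ℝ) < C₀ := lt_of_lt_of_le one_pos hC₀
    calc |deriv φ ((s - b * t) / κ) * (1 / κ) + deriv φ ((-s - b * t) / κ) * (-1 / κ)|
        ≤ |deriv φ ((s - b * t) / κ) * (1 / κ)| + |deriv φ ((-s - b * t) / κ) * (-1 / κ)| :=
          abs_add_le _ _
      _ ≤ C₀ * (1 / κ) + C₀ * (1 / κ) := by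
          rw [abs_mul, abs_mul]
          gcongr
          · rw [abs_of_pos (by positivity)]
          · rw [abs_div, abs_neg, abs_one, abs_of_pos hκ]
      _ = 2 * C₀ / κ := by ring

lemma aux_scale {σ : ℝ} (hσ : 0 < σ) {g : ℝ → ℝ≥0∞} (hg : Measurable g) :
    ∫⁻ s in Ioi (0:ℝ), g (σ * s) = ENNReal.ofReal σ⁻¹ * ∫⁻ u in Ioi (0:ℝ), g u := by
  have hmeas : Measurable fun s : ℝ => σ * s := measurable_const_mul σ
  have hpre : (fun s : ℝ => σ * s) ⁻¹' Ioi 0 = Ioi 0 := by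
    ext s; simp [mul_pos_iff_of_pos_left, hσ]
  calc ∫⁻ s in Ioi (0:ℝ), g (σ * s)
      = ∫⁻ u, g u ∂(Measure.map (fun s => σ * s) (volume.restrict (Ioi 0))) :=
        (lintegral_map hg hmeas).symm
    _ = ∫⁻ u, g u ∂((Measure.map (fun s : ℝ => σ * s) volume).restrict (Ioi 0)) := by
        rw [Measure.restrict_map hmeas measurableSet_Ioi, hpre]
    _ = ENNReal.ofReal σ⁻¹ * ∫⁻ u in Ioi (0:ℝ), g u := by
        rw [Real.map_volume_mul_left hσ.ne', abs_of_pos (inv_pos.2 hσ),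
          Measure.restrict_smul, lintegral_smul_measure, smul_eq_mul]

lemma aux_log_integral {l u : ℝ} (hl : 0 < l) (hlu : l ≤ u) :
    ∫⁻ t in Icc l u, ENNReal.ofReal t⁻¹ = ENNReal.ofReal (Real.log (u / l)) := by
  have hint : IntegrableOn (fun t : ℝ => t⁻¹) (Icc l u) := by
    apply ContinuousOn.integrableOn_Icc
    exact continuousOn_id.inv₀ (fun x hx => (lt_of_lt_of_le hl hx.1).ne')
  rw [← MeasureTheory.ofReal_integral_eq_lintegral_ofReal hint]
  · rw [MeasureTheory.integral_Icc_eq_integral_Ioc, ← intervalIntegral.integral_of_le hlu,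
      integral_inv_of_pos hl (lt_of_lt_of_le hl hlu)]
  · rw [Filter.EventuallyLE, MeasureTheory.ae_restrict_iff' measurableSet_Icc]
    exact Filter.Eventually.of_forall fun t ht => inv_nonneg.2 (le_trans hl.le ht.1)

lemma aux_rpow_le {X M : ℝ≥0∞} (hXM : X ≤ M) (hM : M ≠ ⊤) {r : ℝ} (hr : 1 ≤ r) :
    X ^ r ≤ M ^ (r - 1) * X := by
  rcases eq_or_ne X 0 with rfl | hX0
  · simp [ENNReal.zero_rpow_of_pos (lt_of_lt_of_le one_pos hr)]
  · have hXt : X ≠ ⊤ := fun h => hM (top_le_iff.1 (h ▸ hXM))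
    have : X ^ r = X ^ (r - 1) * X := by
      rw [show r = (r-1)+1 by ring, ENNReal.rpow_add _ _ hX0 hXt, ENNReal.rpow_one]
      ring_nf
    rw [this]
    exact mul_le_mul_left (ENNReal.rpow_le_rpow hXM (by linarith)) X

lemma aux_rpow_mul_self {M : ℝ≥0∞} (hM : M ≠ ⊤) {r : ℝ} (hr : 1 < r) :
    M ^ (r - 1) * M = M ^ r := by
  rcases eq_or_ne M 0 with rfl | hM0
  · rw [ENNReal.zero_rpow_of_pos (by linarith), ENNReal.zero_rpow_of_pos (by linarith), zero_mul]
  · conv_lhs => rw [show M ^ (r-1) * M = M ^ (r-1) * M ^ (1:ℝ) by rw [ENNReal.rpow_one]]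
    rw [← ENNReal.rpow_add _ _ hM0 hM]
    ring_nf

lemma aux_rpow_rpow (x : ℝ≥0∞) {p q : ℝ} (hp : 0 < p) (hq : 0 < q) :
    ((x ^ (1/q)) ^ p) ^ (q/p) = x := by
  rw [← ENNReal.rpow_mul, ← ENNReal.rpow_mul,
    show 1/q * (p * (q/p)) = 1 by field_simp, ENNReal.rpow_one]

set_option maxHeartbeats 2000000 in
/-- Conductor inequality, case `1 < p < q < ∞`:
`∫_0^∞ cap_{p,q}(closure M_{at}, M_t)^{q/p} d(t^q) ≤ c(a,p,q) ‖∇f‖_{L^{p,q}(Ω)}^q`,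
where `d(t^q)` means integration against `q t^{q−1} dt`. -/
theorem conductor_inequality_p_lt_q {n : ℕ} (p q : ℝ)
    (hp : 1 < p) (hpq : p < q)
    {Ω : Set (Fin n → ℝ)} (hΩ : IsOpen Ω)
    (a : ℝ) (ha : 1 < a) :
    ∃ c : ℝ, 0 < c ∧
      ∀ f : (Fin n → ℝ) → ℝ, (∃ L, LipschitzWith L f) → HasCompactSupport f →
        tsupport f ⊆ Ω →
        (∫⁻ t in Ioi (0 : ℝ),
            capacitance n p (ENNReal.ofReal q)
              (closure {x | x ∈ Ω ∧ a * t < |f x|}) {x | x ∈ Ω ∧ t < |f x|} ^ (q / p) *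
              ENNReal.ofReal (q * t ^ (q - 1))) ≤
          ENNReal.ofReal c *
            lorentzNorm (volume.restrict Ω) p (ENNReal.ofReal q)
              (fun x => ‖fderiv ℝ f x‖) ^ q := by
  obtain ⟨C₀, hC₀1, hC₀⟩ := aux_phi_bound
  have hC₀0 : (0:ℝ) < C₀ := lt_of_lt_of_le one_pos hC₀1
  set b₀ : ℝ := (a + 2) / 3 with hb₀def
  set c₀ : ℝ := (2 * a + 1) / 3 with hc₀def
  have hb₀1 : 1 < b₀ := by rw [hb₀def]; linarith
  have hb₀ : 0 < b₀ := by linarith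
  have hbc : b₀ < c₀ := by rw [hb₀def, hc₀def]; linarith
  have hc₀a : c₀ < a := by rw [hc₀def]; linarith
  have hc₀ : 0 < c₀ := by linarith
  have hκ₀ : 0 < c₀ - b₀ := by linarith
  have hq0 : (0:ℝ) < q := by linarith
  have hp0 : (0:ℝ) < p := by linarith
  have hq1 : (1:ℝ) < q := by linarith
  have hr1 : 1 < q / p := (one_lt_div hp0).2 hpq
  have hlog : 0 < Real.log (c₀ / b₀) := Real.log_pos ((one_lt_div hb₀).2 hbc)
  set A : ℝ := (2 * C₀ / (c₀ - b₀)) ^ q with hAdef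
  have hA : 0 < A := Real.rpow_pos_of_pos (by positivity) q
  refine ⟨A * q * Real.log (c₀ / b₀), by positivity, ?_⟩
  rintro f ⟨L, hL⟩ hcs hsupp
  have hfc : Continuous f := hL.continuous
  set G : (Fin n → ℝ) → ℝ := fun x => ‖fderiv ℝ f x‖ with hGdef
  have hGmeas : Measurable G := (measurable_fderiv ℝ f).norm
  set ν : ℝ → ℝ → ℝ≥0∞ := fun t s =>
    volume {x | x ∈ Ω ∧ s < G x ∧ b₀ * t ≤ |f x| ∧ |f x| ≤ c₀ * t} with hνdef
  set lam : ℝ → ℝ≥0∞ := fun s => volume {x | x ∈ Ω ∧ s < G x} with hlamdef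
  -- measurability of ν
  have hνm : Measurable (fun z : ℝ × ℝ => ν z.1 z.2) := by
    set W : Set ((ℝ × ℝ) × (Fin n → ℝ)) :=
      {z | z.2 ∈ Ω ∧ z.1.2 < G z.2 ∧ b₀ * z.1.1 ≤ |f z.2| ∧ |f z.2| ≤ c₀ * z.1.1} with hWdef
    have hW : MeasurableSet W := by
      have heq : W = {z : (ℝ × ℝ) × (Fin n → ℝ) | z.2 ∈ Ω} ∩
          ({z | z.1.2 < G z.2} ∩ ({z | b₀ * z.1.1 ≤ |f z.2|} ∩ {z | |f z.2| ≤ c₀ * z.1.1})) := by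
        ext z
        simp only [hWdef, Set.mem_setOf_eq, Set.mem_inter_iff]
      rw [heq]
      exact (hΩ.measurableSet.preimage measurable_snd).inter
        ((measurableSet_lt (measurable_fst.snd) (hGmeas.comp measurable_snd)).inter
          ((measurableSet_le ((measurable_fst.fst).const_mul b₀)
              ((hfc.measurable.comp measurable_snd).abs)).inter
            (measurableSet_le ((hfc.measurable.comp measurable_snd).abs)
              ((measurable_fst.fst).const_mul c₀))))
    have hrw : ∀ z : ℝ × ℝ, ν z.1 z.2 = ∫⁻ x, W.indicator 1 (z, x) := by
      intro z
      have h1 : (fun x => W.indicator (1 : ((ℝ × ℝ) × (Fin n → ℝ)) → ℝ≥0∞) (z, x))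
          = (Prod.mk z ⁻¹' W).indicator 1 := by
        rfl
      rw [h1, lintegral_indicator_one (hW.preimage measurable_prodMk_left)]
      rfl
    have := Measurable.lintegral_prod_right' (ν := (volume : Measure (Fin n → ℝ)))
      (f := W.indicator 1) (measurable_one.indicator hW)
    convert this using 1
    funext z
    exact hrw z
  have hν_le_lam : ∀ t s, ν t s ≤ lam s := by
    intro t s
    exact measure_mono (fun x hx => ⟨hx.1, hx.2.1⟩)
  have hlam_top : ∀ s : ℝ, 0 < s → lam s ≠ ⊤ := by
    intro s hs
    have hsub : {x | x ∈ Ω ∧ s < G x} ⊆ tsupport f := by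
      intro x hx
      by_contra hxt
      have hf0 : f =ᶠ[nhds x] (fun _ => 0) := by
        filter_upwards [(isClosed_tsupport f).isOpen_compl.mem_nhds hxt] with y hy
        exact image_eq_zero_of_notMem_tsupport hy
      have hfd0 : fderiv ℝ f x = 0 := by rw [hf0.fderiv_eq]; exact fderiv_const_apply 0
      have hG0 : G x = 0 := by rw [hGdef]; simp [hfd0]
      have h2 := hx.2
      rw [hG0] at h2
      linarith
    exact (lt_of_le_of_lt (measure_mono hsub) hcs.measure_lt_top).ne
  -- the key capacity bound
  have key : ∀ t : ℝ, 0 < t →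
      capacitance n p (ENNReal.ofReal q)
          (closure {x | x ∈ Ω ∧ a * t < |f x|}) {x | x ∈ Ω ∧ t < |f x|} ^ (q / p)
        ≤ ENNReal.ofReal p * ENNReal.ofReal (((c₀ - b₀) * t / (2 * C₀)) ^ (-q)) *
            ∫⁻ u in Ioi (0:ℝ), ENNReal.ofReal (u ^ (q - 1)) * ν t u ^ (q / p) := by
    intro t ht
    obtain ⟨ψ, hψd, hψ0, hψ1, hψb⟩ := aux_psi b₀ c₀ t C₀ hb₀ hbc ht hC₀1 hC₀
    set u_t : (Fin n → ℝ) → ℝ := fun x => ψ (f x) with hutdef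
    set Mt : Set (Fin n → ℝ) := {x | x ∈ Ω ∧ t < |f x|} with hMtdef
    have hMt_open : IsOpen Mt := by
      have : Mt = Ω ∩ (fun x => |f x|) ⁻¹' (Ioi t) := by ext x; exact Iff.rfl
      rw [this]; exact hΩ.inter (isOpen_Ioi.preimage (hfc.abs))
    set σ : ℝ := (c₀ - b₀) * t / (2 * C₀) with hσdef
    have hσ : 0 < σ := by positivity
    have hLψ : (0:ℝ) < 2 * C₀ / ((c₀ - b₀) * t) := by positivity
    -- admissibility
    have hsupp_ut : Function.support u_t ⊆ {x | b₀ * t < |f x|} := by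
      intro x hx
      by_contra hxx
      exact hx (hψ0 (f x) (not_lt.1 hxx))
    have hsupp_f : Function.support u_t ⊆ Function.support f := by
      intro x hx
      have := hsupp_ut hx
      have hbt : 0 < b₀ * t := by positivity
      intro hfx
      rw [Set.mem_setOf_eq, hfx] at this
      simp at this; linarith
    have htsupp : tsupport u_t ⊆ {x | b₀ * t ≤ |f x|} := by
      apply closure_minimal
      · exact fun x hx => show b₀ * t ≤ |f x| from le_of_lt (hsupp_ut hx)
      · exact isClosed_le continuous_const hfc.abs
    have hadm : u_t ∈ admissible (closure {x | x ∈ Ω ∧ a * t < |f x|}) Mt := by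
      refine ⟨⟨Real.toNNReal (2 * C₀ / ((c₀ - b₀) * t)) * L, ?_⟩, ?_, ?_, ?_⟩
      · apply LipschitzWith.comp _ hL
        apply lipschitzWith_of_nnnorm_deriv_le hψd
        intro x
        rw [← NNReal.coe_le_coe, coe_nnnorm, Real.norm_eq_abs, Real.coe_toNNReal _ hLψ.le]
        exact hψb x
      · apply IsCompact.of_isClosed_subset hcs isClosed_closure
        exact closure_minimal (subset_trans hsupp_f (subset_tsupport f)) (isClosed_tsupport f)
      · intro x hx
        have h1 : b₀ * t ≤ |f x| := htsupp hx
        have hfx : f x ≠ 0 := by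
          intro h0; rw [h0] at h1; simp at h1
          nlinarith [mul_pos hb₀ ht]
        constructor
        · exact hsupp (subset_tsupport f (by exact hfx))
        · calc t < b₀ * t := by nlinarith
            _ ≤ |f x| := h1
      · have hsub1 : {x | x ∈ Ω ∧ a * t < |f x|} ⊆ {x | a * t ≤ |f x|} :=
          fun x hx => le_of_lt hx.2
        have hcl : closure {x | x ∈ Ω ∧ a * t < |f x|} ⊆ {x | a * t ≤ |f x|} :=
          closure_minimal hsub1 (isClosed_le continuous_const hfc.abs)
        intro x hx
        have h1 : c₀ * t < |f x| := lt_of_lt_of_le (by nlinarith) (hcl hx)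
        refine interior_maximal ?_ (isOpen_lt continuous_const hfc.abs) h1
        intro y hy
        have hy1 : u_t y = 1 := hψ1 (f y) (le_of_lt hy)
        exact show (1:ℝ) ≤ u_t y from le_of_eq hy1.symm
    -- capacity ≤ test function norm
    have hcap : capacitance n p (ENNReal.ofReal q) (closure {x | x ∈ Ω ∧ a * t < |f x|}) Mt
        ≤ lorentzNorm (volume.restrict Mt) p (ENNReal.ofReal q)
            (fun x => ‖fderiv ℝ u_t x‖) ^ p := by
      exact iInf₂_le u_t hadm
    -- distribution function bound
    have hD : ∀ s : ℝ, 0 < s →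
        distribFn (volume.restrict Mt) (fun x => ‖fderiv ℝ u_t x‖) s ≤ ν t (σ * s) := by
      intro s hs
      have hae : ∀ᵐ x : (Fin n → ℝ) ∂volume, DifferentiableAt ℝ f x :=
        hL.ae_differentiableAt
      have hN : volume {x : Fin n → ℝ | ¬ DifferentiableAt ℝ f x} = 0 := by
        rw [← MeasureTheory.ae_iff]; exact hae
      rw [distribFn, Measure.restrict_apply' hMt_open.measurableSet]
      have hsub : {x | s < |‖fderiv ℝ u_t x‖|} ∩ Mt ⊆
          {x : Fin n → ℝ | ¬ DifferentiableAt ℝ f x} ∪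
          {x | x ∈ Ω ∧ σ * s < G x ∧ b₀ * t ≤ |f x| ∧ |f x| ≤ c₀ * t} := by
        rintro x ⟨hx1, hx2⟩
        rw [Set.mem_setOf_eq, abs_norm] at hx1
        by_cases hdiff : DifferentiableAt ℝ f x
        · right
          have hmid : b₀ * t ≤ |f x| ∧ |f x| ≤ c₀ * t := by
            by_contra hmm
            rw [not_and_or] at hmm
            have : fderiv ℝ u_t x = 0 := by
              rcases hmm with hmm | hmm
              · have hopen : IsOpen {y : Fin n → ℝ | |f y| < b₀ * t} :=
                  isOpen_lt hfc.abs continuous_const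
                have : u_t =ᶠ[nhds x] (fun _ => 0) := by
                  filter_upwards [hopen.mem_nhds (not_le.1 hmm)] with y hy
                  exact hψ0 (f y) (le_of_lt hy)
                rw [this.fderiv_eq]; exact fderiv_const_apply 0
              · have hopen : IsOpen {y : Fin n → ℝ | c₀ * t < |f y|} :=
                  isOpen_lt continuous_const hfc.abs
                have : u_t =ᶠ[nhds x] (fun _ => 1) := by
                  filter_upwards [hopen.mem_nhds (not_le.1 hmm)] with y hy
                  exact hψ1 (f y) (le_of_lt hy)
                rw [this.fderiv_eq]; exact fderiv_const_apply 1
            rw [this] at hx1; simp at hx1; linarith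
          refine ⟨hx2.1, ?_, hmid⟩
          -- chain rule bound
          have hchain : HasFDerivAt u_t (deriv ψ (f x) • fderiv ℝ f x) x :=
            (hψd (f x)).hasDerivAt.comp_hasFDerivAt x hdiff.hasFDerivAt
          have hnorm : ‖fderiv ℝ u_t x‖ ≤ 2 * C₀ / ((c₀ - b₀) * t) * G x := by
            rw [hchain.fderiv, norm_smul, Real.norm_eq_abs]
            exact mul_le_mul_of_nonneg_right (hψb (f x)) (norm_nonneg _)
          have : s < 2 * C₀ / ((c₀ - b₀) * t) * G x := lt_of_lt_of_le hx1 hnorm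
          calc σ * s < σ * (2 * C₀ / ((c₀ - b₀) * t) * G x) :=
                (mul_lt_mul_iff_right₀ hσ).2 this
            _ = G x := by rw [hσdef]; field_simp
        · left; exact hdiff
      calc volume ({x | s < |‖fderiv ℝ u_t x‖|} ∩ Mt)
          ≤ volume ({x : Fin n → ℝ | ¬ DifferentiableAt ℝ f x}) +
            volume {x | x ∈ Ω ∧ σ * s < G x ∧ b₀ * t ≤ |f x| ∧ |f x| ≤ c₀ * t} :=
            le_trans (measure_mono hsub) (measure_union_le _ _)
        _ = ν t (σ * s) := by rw [hN, zero_add]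
    -- integral comparison with scaling
    have hgm : Measurable (fun u : ℝ => ENNReal.ofReal (u ^ (q - 1)) * ν t u ^ (q / p)) := by
      apply Measurable.mul
      · exact ((Real.continuous_rpow_const (by linarith)).measurable).ennreal_ofReal
      · exact ENNReal.continuous_rpow_const.measurable.comp
          (hνm.comp (measurable_const.prodMk measurable_id))
    have hI : ∫⁻ s in Ioi (0:ℝ), ENNReal.ofReal (s ^ (q - 1)) *
          distribFn (volume.restrict Mt) (fun x => ‖fderiv ℝ u_t x‖) s ^ (q / p)
        ≤ ENNReal.ofReal (σ ^ (-q)) *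
            ∫⁻ u in Ioi (0:ℝ), ENNReal.ofReal (u ^ (q - 1)) * ν t u ^ (q / p) := by
      calc ∫⁻ s in Ioi (0:ℝ), ENNReal.ofReal (s ^ (q - 1)) *
              distribFn (volume.restrict Mt) (fun x => ‖fderiv ℝ u_t x‖) s ^ (q / p)
          ≤ ∫⁻ s in Ioi (0:ℝ), ENNReal.ofReal (σ ^ (1 - q)) *
              (ENNReal.ofReal ((σ * s) ^ (q - 1)) * ν t (σ * s) ^ (q / p)) := by
            apply lintegral_mono_ae
            rw [MeasureTheory.ae_restrict_iff' measurableSet_Ioi]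
            apply Filter.Eventually.of_forall
            intro s hs
            rw [Set.mem_Ioi] at hs
            have h1 : ENNReal.ofReal (σ ^ (1 - q)) * ENNReal.ofReal ((σ * s) ^ (q - 1))
                = ENNReal.ofReal (s ^ (q - 1)) := by
              rw [← ENNReal.ofReal_mul (Real.rpow_nonneg hσ.le _),
                Real.mul_rpow hσ.le hs.le, ← mul_assoc, ← Real.rpow_add hσ]
              norm_num
            calc ENNReal.ofReal (s ^ (q - 1)) *
                  distribFn (volume.restrict Mt) (fun x => ‖fderiv ℝ u_t x‖) s ^ (q / p)
                ≤ ENNReal.ofReal (s ^ (q - 1)) * ν t (σ * s) ^ (q / p) :=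
                  mul_le_mul_right (ENNReal.rpow_le_rpow (hD s hs) (by positivity)) _
              _ = ENNReal.ofReal (σ ^ (1 - q)) *
                  (ENNReal.ofReal ((σ * s) ^ (q - 1)) * ν t (σ * s) ^ (q / p)) := by
                  rw [← mul_assoc, h1]
        _ = ENNReal.ofReal (σ ^ (1 - q)) *
              ∫⁻ s in Ioi (0:ℝ), (fun u => ENNReal.ofReal (u ^ (q - 1)) * ν t u ^ (q / p)) (σ * s) :=
            lintegral_const_mul' _ _ ENNReal.ofReal_ne_top
        _ = ENNReal.ofReal (σ ^ (1 - q)) * (ENNReal.ofReal σ⁻¹ *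
              ∫⁻ u in Ioi (0:ℝ), ENNReal.ofReal (u ^ (q - 1)) * ν t u ^ (q / p)) := by
            rw [aux_scale hσ hgm]
        _ = ENNReal.ofReal (σ ^ (-q)) *
              ∫⁻ u in Ioi (0:ℝ), ENNReal.ofReal (u ^ (q - 1)) * ν t u ^ (q / p) := by
            rw [← mul_assoc, ← ENNReal.ofReal_mul (Real.rpow_nonneg hσ.le _),
              ← Real.rpow_neg_one σ, ← Real.rpow_add hσ,
              show (1 - q) + (-1) = -q by ring]
    -- combine
    calc capacitance n p (ENNReal.ofReal q)
          (closure {x | x ∈ Ω ∧ a * t < |f x|}) Mt ^ (q / p)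
        ≤ (lorentzNorm (volume.restrict Mt) p (ENNReal.ofReal q)
            (fun x => ‖fderiv ℝ u_t x‖) ^ p) ^ (q / p) :=
          ENNReal.rpow_le_rpow hcap (by positivity)
      _ = ((((ENNReal.ofReal p *
            ∫⁻ s in Ioi (0:ℝ), ENNReal.ofReal (s ^ (q - 1)) *
              distribFn (volume.restrict Mt) (fun x => ‖fderiv ℝ u_t x‖) s ^ (q / p)))
            ^ (1/q)) ^ p) ^ (q / p) := by
          rw [lorentzNorm, if_neg (by simp [hq0.le] : ENNReal.ofReal q ≠ ⊤),
            ENNReal.toReal_ofReal hq0.le]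
      _ = ENNReal.ofReal p *
            ∫⁻ s in Ioi (0:ℝ), ENNReal.ofReal (s ^ (q - 1)) *
              distribFn (volume.restrict Mt) (fun x => ‖fderiv ℝ u_t x‖) s ^ (q / p) :=
          aux_rpow_rpow _ hp0 hq0
      _ ≤ ENNReal.ofReal p * (ENNReal.ofReal (σ ^ (-q)) *
            ∫⁻ u in Ioi (0:ℝ), ENNReal.ofReal (u ^ (q - 1)) * ν t u ^ (q / p)) :=
          mul_le_mul_right hI _
      _ = ENNReal.ofReal p * ENNReal.ofReal (σ ^ (-q)) *
            ∫⁻ u in Ioi (0:ℝ), ENNReal.ofReal (u ^ (q - 1)) * ν t u ^ (q / p) := by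
          rw [mul_assoc]
  -- notation
  set I : ℝ → ℝ≥0∞ :=
    fun t => ∫⁻ u in Ioi (0:ℝ), ENNReal.ofReal (u ^ (q - 1)) * ν t u ^ (q / p) with hIdef
  set logE : ℝ≥0∞ := ENNReal.ofReal (Real.log (c₀ / b₀)) with hlogEdef
  set Lam : ℝ≥0∞ :=
    ∫⁻ s in Ioi (0:ℝ), ENNReal.ofReal (s ^ (q - 1)) * lam s ^ (q / p) with hLamdef
  -- the core one-dimensional estimate
  have core : ∀ s : ℝ, 0 < s →
      ∫⁻ t in Ioi (0:ℝ), ENNReal.ofReal t⁻¹ * ν t s ≤ logE * lam s := by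
    intro s hs
    set E : Set (Fin n → ℝ) := {x | x ∈ Ω ∧ s < G x} with hEdef
    have hE : MeasurableSet E := by
      have heq : E = Ω ∩ {x | s < G x} := by ext x; exact Iff.rfl
      rw [heq]; exact hΩ.measurableSet.inter (measurableSet_lt measurable_const hGmeas)
    set S : Set (ℝ × (Fin n → ℝ)) :=
      {z | b₀ * z.1 ≤ |f z.2| ∧ |f z.2| ≤ c₀ * z.1} with hSdef
    have hSm : MeasurableSet S := by
      have heq2 : S = {z : ℝ × (Fin n → ℝ) | b₀ * z.1 ≤ |f z.2|} ∩ {z | |f z.2| ≤ c₀ * z.1} := by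
        ext z; exact Iff.rfl
      rw [heq2]
      exact (measurableSet_le (measurable_fst.const_mul b₀)
          ((hfc.measurable.comp measurable_snd).abs)).inter
        (measurableSet_le ((hfc.measurable.comp measurable_snd).abs)
          (measurable_fst.const_mul c₀))
    have hν_eq : ∀ t : ℝ, ν t s = ∫⁻ x in E, S.indicator 1 (t, x) := by
      intro t
      have h1 : (fun x => S.indicator (1 : (ℝ × (Fin n → ℝ)) → ℝ≥0∞) (t, x))
          = (Prod.mk t ⁻¹' S).indicator 1 := rfl
      rw [h1, lintegral_indicator_one (hSm.preimage measurable_prodMk_left),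
        Measure.restrict_apply' hE]
      have hseq : {x | x ∈ Ω ∧ s < G x ∧ b₀ * t ≤ |f x| ∧ |f x| ≤ c₀ * t}
          = (Prod.mk t ⁻¹' S) ∩ E := by
        ext x
        simp only [Set.mem_setOf_eq, Set.mem_inter_iff, Set.mem_preimage, hSdef, hEdef]
        tauto
      show volume {x | x ∈ Ω ∧ s < G x ∧ b₀ * t ≤ |f x| ∧ |f x| ≤ c₀ * t}
          = volume ((Prod.mk t ⁻¹' S) ∩ E)
      rw [hseq]
    calc ∫⁻ t in Ioi (0:ℝ), ENNReal.ofReal t⁻¹ * ν t s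
        = ∫⁻ t in Ioi (0:ℝ), ∫⁻ x in E, ENNReal.ofReal t⁻¹ * S.indicator 1 (t, x) := by
          apply lintegral_congr; intro t
          rw [hν_eq t, ← lintegral_const_mul' _ _ ENNReal.ofReal_ne_top]
      _ = ∫⁻ x in E, ∫⁻ t in Ioi (0:ℝ), ENNReal.ofReal t⁻¹ * S.indicator 1 (t, x) := by
          have hmeas : AEMeasurable (Function.uncurry fun (t : ℝ) (x : Fin n → ℝ) =>
              ENNReal.ofReal t⁻¹ * S.indicator 1 (t, x))
              ((volume.restrict (Ioi (0:ℝ))).prod (volume.restrict E)) := by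
            have huncurry : (Function.uncurry fun (t : ℝ) (x : Fin n → ℝ) =>
                ENNReal.ofReal t⁻¹ * S.indicator 1 (t, x))
                = fun z : ℝ × (Fin n → ℝ) => ENNReal.ofReal z.1⁻¹ * S.indicator 1 z := by
              funext z; rfl
            rw [huncurry]
            exact ((measurable_fst.inv.ennreal_ofReal).mul
              (measurable_one.indicator hSm)).aemeasurable
          exact lintegral_lintegral_swap hmeas
      _ ≤ ∫⁻ x in E, ENNReal.ofReal (Real.log (c₀ / b₀)) := by
          apply lintegral_mono
          intro x
          dsimp only
          have hind : ∫⁻ t in Ioi (0:ℝ), ENNReal.ofReal t⁻¹ * S.indicator 1 (t, x)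
              = ∫⁻ t in Ioi (0:ℝ), ({t : ℝ | b₀ * t ≤ |f x| ∧ |f x| ≤ c₀ * t}).indicator
                  (fun t => ENNReal.ofReal t⁻¹) t := by
            apply lintegral_congr
            intro t
            by_cases h : b₀ * t ≤ |f x| ∧ |f x| ≤ c₀ * t <;>
              simp [Set.indicator_apply, hSdef, Set.mem_setOf_eq, h]
          rw [hind]
          rcases eq_or_ne (f x) 0 with hfx | hfx
          · have hzero : ∀ t ∈ Ioi (0:ℝ),
                ({t : ℝ | b₀ * t ≤ |f x| ∧ |f x| ≤ c₀ * t}).indicator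
                  (fun t => ENNReal.ofReal t⁻¹) t = 0 := by
              intro t ht
              rw [Set.mem_Ioi] at ht
              apply Set.indicator_of_notMem
              rw [Set.mem_setOf_eq, hfx, abs_zero]
              intro hcon
              nlinarith [hcon.1]
            have hle0 : ∫⁻ t in Ioi (0:ℝ),
                ({t : ℝ | b₀ * t ≤ |f x| ∧ |f x| ≤ c₀ * t}).indicator
                  (fun t => ENNReal.ofReal t⁻¹) t ≤ ∫⁻ _ in Ioi (0:ℝ), 0 := by
              apply lintegral_mono_ae
              rw [MeasureTheory.ae_restrict_iff' measurableSet_Ioi]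
              exact Filter.Eventually.of_forall fun t ht => le_of_eq (hzero t ht)
            simp only [lintegral_zero] at hle0
            exact le_trans hle0 zero_le
          · have hy : 0 < |f x| := abs_pos.2 hfx
            have hSeq : {t : ℝ | b₀ * t ≤ |f x| ∧ |f x| ≤ c₀ * t}
                = Icc (|f x| / c₀) (|f x| / b₀) := by
              ext t
              simp only [Set.mem_setOf_eq, Set.mem_Icc]
              constructor
              · rintro ⟨h1, h2⟩
                exact ⟨(div_le_iff₀ hc₀).2 (by linarith), (le_div_iff₀ hb₀).2 (by linarith)⟩
              · rintro ⟨h1, h2⟩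
                exact ⟨by nlinarith [(le_div_iff₀ hb₀).1 h2], by nlinarith [(div_le_iff₀ hc₀).1 h1]⟩
            rw [hSeq, lintegral_indicator measurableSet_Icc,
              Measure.restrict_restrict measurableSet_Icc,
              Set.inter_eq_self_of_subset_left
                (show Icc (|f x| / c₀) (|f x| / b₀) ⊆ Ioi (0:ℝ) from
                  fun u hu => lt_of_lt_of_le (by positivity) hu.1),
              aux_log_integral (by positivity)
                (by apply div_le_div_of_nonneg_left hy.le hb₀ hbc.le)]
            apply le_of_eq
            congr 1
            rw [show |f x| / b₀ / (|f x| / c₀) = c₀ / b₀ by field_simp]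
      _ = logE * lam s := by
          rw [setLIntegral_const]
  -- step 1 : bound the conductor integral by the double integral
  have hKtop : ENNReal.ofReal p * ENNReal.ofReal A * ENNReal.ofReal q ≠ ⊤ :=
    ENNReal.mul_ne_top (ENNReal.mul_ne_top ENNReal.ofReal_ne_top ENNReal.ofReal_ne_top)
      ENNReal.ofReal_ne_top
  have step1 : (∫⁻ t in Ioi (0 : ℝ),
        capacitance n p (ENNReal.ofReal q)
          (closure {x | x ∈ Ω ∧ a * t < |f x|}) {x | x ∈ Ω ∧ t < |f x|} ^ (q / p) *
          ENNReal.ofReal (q * t ^ (q - 1)))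
      ≤ (ENNReal.ofReal p * ENNReal.ofReal A * ENNReal.ofReal q) *
          ∫⁻ t in Ioi (0:ℝ), ENNReal.ofReal t⁻¹ * I t := by
    rw [← lintegral_const_mul' _ _ hKtop]
    apply lintegral_mono_ae
    rw [MeasureTheory.ae_restrict_iff' measurableSet_Ioi]
    apply Filter.Eventually.of_forall
    intro t ht
    rw [Set.mem_Ioi] at ht
    have htq : (0:ℝ) < t ^ q := Real.rpow_pos_of_pos ht q
    have hreal : ((c₀ - b₀) * t / (2 * C₀)) ^ (-q) * (q * t ^ (q - 1)) = A * (q * t⁻¹) := by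
      have e1 : ((c₀ - b₀) * t / (2 * C₀)) ^ (-q) = A * (t ^ q)⁻¹ := by
        rw [show (c₀ - b₀) * t / (2 * C₀) = (2 * C₀ / (c₀ - b₀))⁻¹ * t by field_simp,
          Real.rpow_neg (by positivity), Real.mul_rpow (by positivity) ht.le,
          Real.inv_rpow (by positivity), hAdef, mul_inv, inv_inv]
      have e2 : t ^ (q - 1) = t ^ q / t := by
        rw [Real.rpow_sub ht, Real.rpow_one]
      rw [e1, e2]
      field_simp
    calc capacitance n p (ENNReal.ofReal q)
            (closure {x | x ∈ Ω ∧ a * t < |f x|}) {x | x ∈ Ω ∧ t < |f x|} ^ (q / p) *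
            ENNReal.ofReal (q * t ^ (q - 1))
        ≤ (ENNReal.ofReal p * ENNReal.ofReal (((c₀ - b₀) * t / (2 * C₀)) ^ (-q)) * I t) *
            ENNReal.ofReal (q * t ^ (q - 1)) := mul_le_mul_left (key t ht) _
      _ = ENNReal.ofReal p * I t *
            (ENNReal.ofReal (((c₀ - b₀) * t / (2 * C₀)) ^ (-q)) * ENNReal.ofReal (q * t ^ (q - 1))) := by
          ring
      _ = ENNReal.ofReal p * I t * ENNReal.ofReal (A * (q * t⁻¹)) := by
          rw [← ENNReal.ofReal_mul (Real.rpow_nonneg (by positivity) _), hreal]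
      _ = ENNReal.ofReal p * ENNReal.ofReal A * ENNReal.ofReal q *
            (ENNReal.ofReal t⁻¹ * I t) := by
          rw [ENNReal.ofReal_mul hA.le, ENNReal.ofReal_mul hq0.le]
          ring
  -- step 2 : swap and use the core estimate
  have hHm : Measurable (fun z : ℝ × ℝ =>
      ENNReal.ofReal z.1⁻¹ * (ENNReal.ofReal (z.2 ^ (q - 1)) * ν z.1 z.2 ^ (q / p))) :=
    (measurable_fst.inv.ennreal_ofReal).mul
      ((((Real.continuous_rpow_const (by linarith)).measurable.comp
          measurable_snd).ennreal_ofReal).mul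
        (ENNReal.continuous_rpow_const.measurable.comp hνm))
  have step2 : ∫⁻ t in Ioi (0:ℝ), ENNReal.ofReal t⁻¹ * I t ≤ logE * Lam := by
    have hswap : ∫⁻ t in Ioi (0:ℝ), ENNReal.ofReal t⁻¹ * I t
        = ∫⁻ s in Ioi (0:ℝ), ∫⁻ t in Ioi (0:ℝ),
            ENNReal.ofReal t⁻¹ * (ENNReal.ofReal (s ^ (q - 1)) * ν t s ^ (q / p)) := by
      rw [← lintegral_lintegral_swap hHm.aemeasurable]
      apply lintegral_congr; intro t
      exact (lintegral_const_mul' _ _ ENNReal.ofReal_ne_top).symm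
    rw [hswap, hLamdef, ← lintegral_const_mul' logE _ ENNReal.ofReal_ne_top]
    apply lintegral_mono_ae
    rw [MeasureTheory.ae_restrict_iff' measurableSet_Ioi]
    apply Filter.Eventually.of_forall
    intro s hs
    rw [Set.mem_Ioi] at hs
    have hlam_ne : lam s ≠ ⊤ := hlam_top s hs
    have hpow_ne : lam s ^ (q / p - 1) ≠ ⊤ :=
      ENNReal.rpow_ne_top_of_nonneg (by linarith) hlam_ne
    calc ∫⁻ t in Ioi (0:ℝ),
            ENNReal.ofReal t⁻¹ * (ENNReal.ofReal (s ^ (q - 1)) * ν t s ^ (q / p))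
        = ENNReal.ofReal (s ^ (q - 1)) *
            ∫⁻ t in Ioi (0:ℝ), ENNReal.ofReal t⁻¹ * ν t s ^ (q / p) := by
          rw [← lintegral_const_mul' _ _ ENNReal.ofReal_ne_top]
          apply lintegral_congr; intro t; ring
      _ ≤ ENNReal.ofReal (s ^ (q - 1)) *
            (lam s ^ (q / p - 1) * ∫⁻ t in Ioi (0:ℝ), ENNReal.ofReal t⁻¹ * ν t s) := by
          apply mul_le_mul_right
          rw [← lintegral_const_mul' _ _ hpow_ne]
          apply lintegral_mono
          intro t
          calc ENNReal.ofReal t⁻¹ * ν t s ^ (q / p)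
              ≤ ENNReal.ofReal t⁻¹ * (lam s ^ (q / p - 1) * ν t s) :=
                mul_le_mul_right (aux_rpow_le (hν_le_lam t s) hlam_ne hr1.le) _
            _ = lam s ^ (q / p - 1) * (ENNReal.ofReal t⁻¹ * ν t s) := by ring
      _ ≤ ENNReal.ofReal (s ^ (q - 1)) * (lam s ^ (q / p - 1) * (logE * lam s)) :=
          mul_le_mul_right (mul_le_mul_right (core s hs) _) _
      _ = logE * (ENNReal.ofReal (s ^ (q - 1)) * lam s ^ (q / p)) := by
          rw [show lam s ^ (q / p - 1) * (logE * lam s)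
              = logE * (lam s ^ (q / p - 1) * lam s) by ring,
            aux_rpow_mul_self hlam_ne hr1]
          ring
  -- conclusion
  have hdist : ∀ s : ℝ,
      distribFn (volume.restrict Ω) (fun x => ‖fderiv ℝ f x‖) s = lam s := by
    intro s
    rw [distribFn, Measure.restrict_apply' hΩ.measurableSet]
    congr 1
    ext x
    simp only [Set.mem_inter_iff, Set.mem_setOf_eq, abs_norm, hGdef]
    tauto
  have hRHS : lorentzNorm (volume.restrict Ω) p (ENNReal.ofReal q)
      (fun x => ‖fderiv ℝ f x‖) ^ q = ENNReal.ofReal p * Lam := by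
    rw [lorentzNorm, if_neg (by simp [hq0.le] : (ENNReal.ofReal q : ℝ≥0∞) ≠ ⊤),
      ENNReal.toReal_ofReal hq0.le, ← ENNReal.rpow_mul,
      show 1 / q * q = 1 by field_simp, ENNReal.rpow_one, hLamdef]
    congr 1
    apply lintegral_congr
    intro s
    rw [hdist s]
  calc (∫⁻ t in Ioi (0 : ℝ),
        capacitance n p (ENNReal.ofReal q)
          (closure {x | x ∈ Ω ∧ a * t < |f x|}) {x | x ∈ Ω ∧ t < |f x|} ^ (q / p) *
          ENNReal.ofReal (q * t ^ (q - 1)))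
      ≤ (ENNReal.ofReal p * ENNReal.ofReal A * ENNReal.ofReal q) *
          ∫⁻ t in Ioi (0:ℝ), ENNReal.ofReal t⁻¹ * I t := step1
    _ ≤ (ENNReal.ofReal p * ENNReal.ofReal A * ENNReal.ofReal q) * (logE * Lam) :=
        mul_le_mul_right step2 _
    _ = ENNReal.ofReal (A * q * Real.log (c₀ / b₀)) * (ENNReal.ofReal p * Lam) := by
        rw [ENNReal.ofReal_mul (by positivity), ENNReal.ofReal_mul hA.le, hlogEdef]
        ring
    _ = ENNReal.ofReal (A * q * Real.log (c₀ / b₀)) *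
          lorentzNorm (volume.restrict Ω) p (ENNReal.ofReal q)
            (fun x => ‖fderiv ℝ f x‖) ^ q := by rw [hRHS]
end
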